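/- arXiv:2009.04906 — 8 statements merged into one kernel-verified Lean document; each statement's English description precedes it below -/
import Mathlib

section
/- Let l < u be real numbers, 0 < μ ≤ L, and let f : [l,u] → ℝ attain its minimum over [l,u] at a point x* ∈ [l,u] and satisfy (μ/2)(x − x*)² ≤ f(x) − f(x*) ≤ (L/2)(x − x*)² for all x ∈ [l,u]. Let n be a positive integer with n ≥ 2·√(L/μ), and for i = 0,…,n set x_i = l + i·(u−l)/n. If i* ∈ {0,…,n} is an index minimizing f(x_i) over i ∈ {0,…,n}, then |x_{i*} − x*| ≤ (u−l)/4. -/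
/-!
With mesh `h = (u - l) / n`, some grid point lies within `h / 2` of `x*`, so by the upper
parabola its value exceeds `f x*` by at most `L h² / 8`. The best grid point is no worse, so the
lower parabola gives `μ d² / 2 ≤ L h² / 8` for its distance `d` to `x*`. Finally
`n ≥ 2 √(L / μ)` means `4 L ≤ μ n²`, which turns this into `d ≤ n h / 4 = (u - l) / 4`.
-/

open Set

lemma exists_nat_le_abs_sub_le_half {t : ℝ} {n : ℕ} (ht0 : 0 ≤ t) (htn : t ≤ n) :
    ∃ j ≤ n, |(j : ℝ) - t| ≤ 1 / 2 := by
  refine ⟨⌊t + 1 / 2⌋₊, ?_, ?_⟩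
  · have : t + 1 / 2 < ((n + 1 : ℕ) : ℝ) := by push_cast; linarith
    have := (Nat.floor_lt (by linarith)).mpr this
    omega
  · have := Nat.floor_le (show 0 ≤ t + 1 / 2 by linarith)
    have := Nat.lt_floor_add_one (t + 1 / 2)
    rw [abs_le]
    constructor <;> linarith

lemma grid_point_mem_Icc {l u : ℝ} (hlu : l ≤ u) {n i : ℕ} (hi : i ≤ n) :
    l + i * (u - l) / n ∈ Icc l u := by
  have hratio : (i : ℝ) / n ∈ Icc (0 : ℝ) 1 :=
    ⟨by positivity, div_le_one_of_le₀ (by exact_mod_cast hi) n.cast_nonneg⟩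
  rw [mul_div_right_comm]
  constructor <;> nlinarith [hratio.1, hratio.2]

lemma exists_grid_point_abs_sub_le {l u y : ℝ} (hlu : l < u) (hy : y ∈ Icc l u) {n : ℕ}
    (hn : 0 < n) : ∃ j ≤ n, |l + j * (u - l) / n - y| ≤ (u - l) / n / 2 := by
  have hn' : (0 : ℝ) < n := by exact_mod_cast hn
  have hul : 0 < u - l := by linarith
  have hmesh : 0 < (u - l) / n := div_pos hul hn'
  obtain ⟨j, hjn, hj⟩ := exists_nat_le_abs_sub_le_half (t := (y - l) * n / (u - l))
    (div_nonneg (mul_nonneg (by linarith [hy.1]) hn'.le) hul.le)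
    (by rw [div_le_iff₀ hul]; nlinarith [hy.2])
  refine ⟨j, hjn, ?_⟩
  have hsplit : l + j * (u - l) / n - y = (j - (y - l) * n / (u - l)) * ((u - l) / n) := by
    field_simp
    ring
  rw [hsplit, abs_mul, abs_of_pos hmesh]
  linarith [mul_le_mul_of_nonneg_right hj hmesh.le]

lemma four_mul_le_mul_sq_of_two_sqrt_div_le {μ L n : ℝ} (hμ : 0 < μ)
    (hn : 2 * Real.sqrt (L / μ) ≤ n) : 4 * L ≤ μ * n ^ 2 := by
  have hsq : L / μ ≤ (n / 2) ^ 2 := (Real.sqrt_le_iff.mp (by linarith)).2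
  rw [div_le_iff₀ hμ] at hsq
  linarith

lemma mul_sq_le_of_sandwich {f : ℝ → ℝ} {μ L xstar a b δ : ℝ} (hL : 0 ≤ L)
    (hlow : μ / 2 * (a - xstar) ^ 2 ≤ f a - f xstar)
    (hupp : f b - f xstar ≤ L / 2 * (b - xstar) ^ 2)
    (hab : f a ≤ f b) (hb : |b - xstar| ≤ δ) : μ * (a - xstar) ^ 2 ≤ L * δ ^ 2 := by
  have hb2 : (b - xstar) ^ 2 ≤ δ ^ 2 := sq_le_sq' (abs_le.mp hb).1 (abs_le.mp hb).2
  linarith [mul_le_mul_of_nonneg_left hb2 hL]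

lemma mul_sq_half_mesh_le {μ L c : ℝ} {n : ℕ} (hn : 0 < n) (h : 4 * L ≤ μ * n ^ 2) :
    L * (c / n / 2) ^ 2 ≤ μ * (c / 4) ^ 2 := by
  have hn' : (0 : ℝ) < n := by exact_mod_cast hn
  have hexpand :
      μ * (c / 4) ^ 2 - L * (c / n / 2) ^ 2 = (μ * n ^ 2 - 4 * L) * (c / n) ^ 2 / 16 := by
    field_simp
    ring
  linarith [mul_nonneg (sub_nonneg.mpr h) (sq_nonneg (c / n))]

theorem bbs_one_dim_general (l u μ L : ℝ) (hlu : l < u) (hμ : 0 < μ) (hμL : μ ≤ L)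
    (f : ℝ → ℝ) (xstar : ℝ) (hxstar : xstar ∈ Set.Icc l u)
    (hlow : ∀ x ∈ Set.Icc l u, μ / 2 * (x - xstar) ^ 2 ≤ f x - f xstar)
    (hupp : ∀ x ∈ Set.Icc l u, f x - f xstar ≤ L / 2 * (x - xstar) ^ 2)
    (n : ℕ) (hn0 : 0 < n) (hn : 2 * Real.sqrt (L / μ) ≤ n)
    (x : ℕ → ℝ) (hx : ∀ i, x i = l + i * (u - l) / n)
    (istar : ℕ) (histar : istar ≤ n)
    (hbest : ∀ i ≤ n, f (x istar) ≤ f (x i)) :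
    |x istar - xstar| ≤ (u - l) / 4 := by
  have hgrid : ∀ i ≤ n, x i ∈ Icc l u := fun i hi => hx i ▸ grid_point_mem_Icc hlu.le hi
  obtain ⟨j, hjn, hj⟩ := exists_grid_point_abs_sub_le hlu hxstar hn0
  rw [← hx] at hj
  have hbound : μ * (x istar - xstar) ^ 2 ≤ μ * ((u - l) / 4) ^ 2 :=
    (mul_sq_le_of_sandwich (hμ.le.trans hμL) (hlow _ (hgrid _ histar)) (hupp _ (hgrid _ hjn))
      (hbest j hjn) hj).trans
      (mul_sq_half_mesh_le hn0 (four_mul_le_mul_sq_of_two_sqrt_div_le hμ hn))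
  exact abs_le_of_sq_le_sq (le_of_mul_le_mul_left hbound hμ) (by linarith)

/-- one iteration of the one-dimensional BBS algorithm:
if `n ≥ 2√(L/μ)`, the grid point with smallest `f`-value is within `(u-l)/4`
of the true minimizer `x*`. -/
theorem bbs_one_dim (l u μ L : ℝ) (hlu : l < u) (hμ : 0 < μ) (hμL : μ ≤ L)
    (f : ℝ → ℝ) (xstar : ℝ) (hxstar : xstar ∈ Set.Icc l u)
    (hmin : ∀ x ∈ Set.Icc l u, f xstar ≤ f x)
    (hlow : ∀ x ∈ Set.Icc l u, μ / 2 * (x - xstar) ^ 2 ≤ f x - f xstar)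
    (hupp : ∀ x ∈ Set.Icc l u, f x - f xstar ≤ L / 2 * (x - xstar) ^ 2)
    (n : ℕ) (hn0 : 0 < n) (hn : 2 * Real.sqrt (L / μ) ≤ n)
    (x : ℕ → ℝ) (hx : ∀ i, x i = l + i * (u - l) / n)
    (istar : ℕ) (histar : istar ≤ n)
    (hbest : ∀ i ≤ n, f (x istar) ≤ f (x i)) :
    |x istar - xstar| ≤ (u - l) / 4 :=
  bbs_one_dim_general l u μ L hlu hμ hμL f xstar hxstar hlow hupp n hn0 hn x hx istar histar hbest
end

section
/- Let d ≥ 1, 0 < μ ≤ L, α > 0, and let C = ∏_{i=1}^d [b_i, B_i] ⊂ ℝ^d be a box. Let f : C → ℝ attain its minimum over C at x* ∈ C and satisfy (μ/2)‖x − x*‖² ≤ f(x) − f(x*) ≤ (L/2)‖x − x*‖² for all x ∈ C (Euclidean norm). Set R = max_{1≤i≤d} (B_i − b_i), let n ≥ α·√(dL/μ), and let r ≤ R/n, r > 0. If y, z ∈ C satisfy f(y) ≤ f(z) and |z_i − x*_i| ≤ r/2 for every coordinate i, then ‖y − x*‖ ≤ R/(2α); in particular |y_i − x*_i| ≤ R/(2α)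 for every coordinate i. (This is the key estimate of Theorem 1: the point found by one iteration of Multi BBS is within R/(2α) of the true minimizer in every coordinate, so the maximum edge length of the localizing box decreases by at least a factor α per iteration.) -/
/-- key estimate of Theorem 1 (Multi BBS). If the grid point `y`
with smallest value satisfies `f(y) ≤ f(z)` for the grid point `z` that is
coordinatewise within `r/2` of the minimizer `x*`, with grid spacing
`r ≤ R/n`, `n ≥ α√(dL/μ)`, then `‖y - x*‖ ≤ R/(2α)`, in particular every
coordinate of `y` is within `R/(2α)` of the corresponding coordinate of `x*`. -/
theorem multi_bbs_key_estimate (d : ℕ) (hd : 1 ≤ d) (μ L α : ℝ)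
    (hμ : 0 < μ) (hμL : μ ≤ L) (hα : 0 < α)
    (b B : Fin d → ℝ) (hbB : ∀ i, b i ≤ B i)
    (C : Set (EuclideanSpace ℝ (Fin d)))
    (hC : C = {x : EuclideanSpace ℝ (Fin d) | ∀ i, x i ∈ Set.Icc (b i) (B i)})
    (f : EuclideanSpace ℝ (Fin d) → ℝ)
    (xstar : EuclideanSpace ℝ (Fin d)) (hxstar : xstar ∈ C)
    (hmin : ∀ x ∈ C, f xstar ≤ f x)
    (hlow : ∀ x ∈ C, μ / 2 * ‖x - xstar‖ ^ 2 ≤ f x - f xstar)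
    (hupp : ∀ x ∈ C, f x - f xstar ≤ L / 2 * ‖x - xstar‖ ^ 2)
    (R : ℝ) (hR : IsGreatest (Set.range fun i => B i - b i) R)
    (n r : ℝ) (hn : α * Real.sqrt (d * L / μ) ≤ n)
    (hr0 : 0 < r) (hrR : r ≤ R / n)
    (y z : EuclideanSpace ℝ (Fin d)) (hy : y ∈ C) (hz : z ∈ C)
    (hfyz : f y ≤ f z) (hzclose : ∀ i, |z i - xstar i| ≤ r / 2) :
    ‖y - xstar‖ ≤ R / (2 * α) ∧ ∀ i, |y i - xstar i| ≤ R / (2 * α) := by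
  set s := Real.sqrt (d * L / μ) with hs
  have hd0 : (1:ℝ) ≤ (d:ℝ) := by exact_mod_cast hd
  have hL : 0 < L := lt_of_lt_of_le hμ hμL
  have hdsq : (1:ℝ) ≤ d * L / μ := by
    rw [le_div_iff₀ hμ]
    nlinarith
  have hs1 : 1 ≤ s := by
    rw [hs]
    nlinarith [Real.sq_sqrt (by linarith : (0:ℝ) ≤ d * L / μ),
      Real.sqrt_nonneg (d * L / μ)]
  have hspos : 0 < s := by linarith
  have hnpos : 0 < n := lt_of_lt_of_le (by positivity) hn
  have hnr : n * r ≤ R := by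
    rw [le_div_iff₀ hnpos] at hrR; linarith [hrR]
  have hRpos : 0 < R := lt_of_lt_of_le (by positivity) hnr
  -- bound on ‖z - xstar‖²
  have hznorm : ‖z - xstar‖ ^ 2 ≤ d * (r / 2) ^ 2 := by
    have heq : ‖z - xstar‖ ^ 2 = ∑ i, (z i - xstar i) ^ 2 := by
      rw [EuclideanSpace.norm_eq, Real.sq_sqrt (Finset.sum_nonneg fun i _ => sq_nonneg _)]
      exact Finset.sum_congr rfl fun i _ => by simp [Real.norm_eq_abs, sq_abs]
    rw [heq]
    calc ∑ i, (z i - xstar i) ^ 2 ≤ ∑ _i : Fin d, (r / 2) ^ 2 := by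
          apply Finset.sum_le_sum
          intro i _
          have := hzclose i
          nlinarith [abs_nonneg (z i - xstar i), sq_abs (z i - xstar i)]
      _ = d * (r / 2) ^ 2 := by simp [Finset.sum_const, mul_comm]
  have hkey : μ / 2 * ‖y - xstar‖ ^ 2 ≤ L / 2 * (d * (r / 2) ^ 2) := by
    have h1 := hlow y hy
    have h2 := hupp z hz
    have h3 : L / 2 * ‖z - xstar‖ ^ 2 ≤ L / 2 * (d * (r / 2) ^ 2) := by
      apply mul_le_mul_of_nonneg_left hznorm (by positivity)
    linarith
  have hy2 : ‖y - xstar‖ ^ 2 ≤ (s * (r / 2)) ^ 2 := by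
    have hs2 : s ^ 2 = d * L / μ := Real.sq_sqrt (by positivity)
    have : ‖y - xstar‖ ^ 2 ≤ d * L / μ * (r / 2) ^ 2 := by
      rw [div_mul_eq_mul_div, le_div_iff₀ hμ]
      nlinarith
    calc ‖y - xstar‖ ^ 2 ≤ d * L / μ * (r / 2) ^ 2 := this
      _ = (s * (r / 2)) ^ 2 := by rw [mul_pow, hs2]
  have hynorm : ‖y - xstar‖ ≤ s * (r / 2) := by
    have h := Real.sqrt_le_sqrt hy2
    rwa [Real.sqrt_sq (norm_nonneg _), Real.sqrt_sq (by positivity)] at h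
  have hfinal : ‖y - xstar‖ ≤ R / (2 * α) := by
    have hsn : s ≤ n / α := by rw [le_div_iff₀ hα]; linarith [hn, mul_comm α s]
    have : s * (r / 2) ≤ (n / α) * (r / 2) := by
      apply mul_le_mul_of_nonneg_right hsn (by positivity)
    have h2 : (n / α) * (r / 2) ≤ R / (2 * α) := by
      rw [div_mul_eq_mul_div, div_le_div_iff₀ (by positivity) (by positivity)]
      nlinarith
    linarith
  refine ⟨hfinal, fun i => ?_⟩
  have hcoord : |y i - xstar i| ≤ ‖y - xstar‖ := by
    rw [EuclideanSpace.norm_eq, ← Real.sqrt_sq_eq_abs]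
    apply Real.sqrt_le_sqrt
    have h2 : (y i - xstar i) ^ 2 = ‖(y - xstar) i‖ ^ 2 := by
      simp [Real.norm_eq_abs, sq_abs]
    rw [h2]
    exact Finset.single_le_sum (f := fun j => ‖(y - xstar) j‖ ^ 2)
      (fun j _ => sq_nonneg _) (Finset.mem_univ i)
  linarith
end

section
/- Let d ≥ 2, M > 0, 0 ≤ Δ < M/2, n a positive integer, R > 0. Let f : ℝ^d → ℝ satisfy f(x) − f(x*) = (M/2 + δ(x))·‖x − x*‖² with |δ(x)| ≤ Δ for all x, where x* ∈ ℝ^d. Fix a coordinate i and let y, z, p ∈ ℝ^d agree in every coordinate j ≠ i, with p_i = x*_i. If f(y) ≤ f(z) and |z_i − x*_i| ≤ R/(2n), then (M/2 − Δ)·(y_i − x*_i)² ≤ (M/2 + Δ)·(R/(2n))² + 2Δ·‖p − x*‖². -/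
lemma eucl_norm_sq_sum {d : ℕ} (v : EuclideanSpace ℝ (Fin d)) :
    ‖v‖ ^ 2 = ∑ j, (v j) ^ 2 := by
  rw [EuclideanSpace.norm_eq, Real.sq_sqrt (by positivity)]
  simp [sq_abs]

/-- the intermediate inequality (11) in the proof of Theorem 2:
if additionally `|z_i - x*_i| ≤ R/(2n)` then
`(M/2 - Δ)(y_i - x*_i)² ≤ (M/2 + Δ)(R/(2n))² + 2Δ‖p - x*‖²`. -/
theorem direction_bbs_coordinate_bound (d : ℕ) (hd : 2 ≤ d) (M Δ : ℝ)
    (hM : 0 < M) (hΔ0 : 0 ≤ Δ) (hΔM : Δ < M / 2)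
    (n : ℕ) (hn : 0 < n) (R : ℝ) (hR : 0 < R)
    (f : EuclideanSpace ℝ (Fin d) → ℝ)
    (δ : EuclideanSpace ℝ (Fin d) → ℝ)
    (xstar : EuclideanSpace ℝ (Fin d))
    (hf : ∀ x, f x - f xstar = (M / 2 + δ x) * ‖x - xstar‖ ^ 2)
    (hδbound : ∀ x, |δ x| ≤ Δ)
    (i : Fin d) (y z p : EuclideanSpace ℝ (Fin d))
    (hyz : ∀ j, j ≠ i → y j = z j) (hyp : ∀ j, j ≠ i → y j = p j)
    (hpi : p i = xstar i)
    (hfyz : f y ≤ f z)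
    (hzclose : |z i - xstar i| ≤ R / (2 * n)) :
    (M / 2 - Δ) * (y i - xstar i) ^ 2 ≤
      (M / 2 + Δ) * (R / (2 * n)) ^ 2 + 2 * Δ * ‖p - xstar‖ ^ 2 := by
  set P := ‖p - xstar‖ ^ 2 with hP
  have hsplit : ∀ (w : EuclideanSpace ℝ (Fin d)), (∀ j, j ≠ i → w j = p j) →
      ‖w - xstar‖ ^ 2 = (w i - xstar i) ^ 2 + P := by
    intro w hw
    rw [hP, eucl_norm_sq_sum, eucl_norm_sq_sum,
      ← Finset.sum_erase_add _ _ (Finset.mem_univ i),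
      ← Finset.sum_erase_add _ _ (Finset.mem_univ i)]
    have h1 : ∀ j ∈ Finset.univ.erase i,
        ((w - xstar) j) ^ 2 = ((p - xstar) j) ^ 2 := by
      intro j hj
      have := hw j (Finset.ne_of_mem_erase hj)
      simp [this]
    rw [Finset.sum_congr rfl h1]
    have : ((p - xstar) i) ^ 2 = 0 := by simp [hpi]
    simp only [PiLp.sub_apply] at this ⊢
    rw [this]
    ring
  have hPy := hsplit y hyp
  have hPz := hsplit z (fun j hj => (hyz j hj) ▸ hyp j hj)
  have hfy := hf y
  have hfz := hf z
  have hkey : (M / 2 + δ y) * ‖y - xstar‖ ^ 2 ≤ (M / 2 + δ z) * ‖z - xstar‖ ^ 2 := by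
    rw [← hfy, ← hfz]; linarith
  have hδy := abs_le.1 (hδbound y)
  have hδz := abs_le.1 (hδbound z)
  have hny : (0:ℝ) ≤ ‖y - xstar‖ ^ 2 := by positivity
  have hnz : (0:ℝ) ≤ ‖z - xstar‖ ^ 2 := by positivity
  have hlow : (M / 2 - Δ) * ‖y - xstar‖ ^ 2 ≤ (M / 2 + δ y) * ‖y - xstar‖ ^ 2 :=
    mul_le_mul_of_nonneg_right (by linarith) hny
  have hhigh : (M / 2 + δ z) * ‖z - xstar‖ ^ 2 ≤ (M / 2 + Δ) * ‖z - xstar‖ ^ 2 :=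
    mul_le_mul_of_nonneg_right (by linarith) hnz
  have hz2 : (z i - xstar i) ^ 2 ≤ (R / (2 * n)) ^ 2 := by
    have := sq_abs (z i - xstar i)
    nlinarith [abs_nonneg (z i - xstar i)]
  have hP0 : (0:ℝ) ≤ P := by positivity
  nlinarith [mul_le_mul_of_nonneg_left hz2 (by linarith : (0:ℝ) ≤ M / 2 + Δ)]
end

section
/- Let d ≥ 2 be an integer, M > 0, Δ = M/(16(d−1)), n = 15, and R > 0. Let f : ℝ^d → ℝ satisfy f(x) − f(x*) = (M/2 + δ(x))·‖x − x*‖² with |δ(x)| ≤ Δ for all x, where x* ∈ ℝ^d. Fix a coordinate i and let y, z, p ∈ ℝ^d agree in every coordinate j ≠ i, with p_i = x*_i. Assume f(y) ≤ f(z), |z_i − x*_i| ≤ R/(2n) = R/30, and ‖p − x*‖² ≤ (d−1)R²/4. Then (y_i − x*_i)² ≤ (51/700)·R², and consequently |y_i − z_i| ≤ (1/30 + √(51/700))·R ≤ R/3. (This is the key estimate of Theorem 2: each inner step of Direction BBS localizes the i-th coordinate of the minimizer to within R/3 of the found point, so the maximum edge length of the box decreases by at least a factor 3/2 per inner step.)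 -/
/-!
Comparing `f y ≤ f z` through the two-sided quadratic model gives
`(M/2 - Δ)‖y - x*‖² ≤ (M/2 + Δ)‖z - x*‖²`. Both squared distances are the `i`-th coordinate
term plus the common term `‖p - x*‖² ≤ (d-1)R²/4`, which survives only with coefficient `2Δ`;
the choice `Δ = M/(16(d-1))` cancels the dimension, so it contributes at most `MR²/32`, while
the `z`-term contributes at most `(9M/16)(R/30)²`. Dividing by `M/2 - Δ ≥ 7M/16` gives
`(y_i - x*_i)² ≤ 51R²/700`, and `1/30 + √(51/700) < 1/30 + 3/10 = 1/3`.
-/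

lemma EuclideanSpace.norm_sub_sq_eq_of_eq_off {ι : Type*} [Fintype ι] [DecidableEq ι]
    {x y p : EuclideanSpace ℝ ι} {i : ι} (hyp : ∀ j, j ≠ i → y j = p j) (hpi : p i = x i) :
    ‖y - x‖ ^ 2 = (y i - x i) ^ 2 + ‖p - x‖ ^ 2 := by
  have hcompl : ∑ j ∈ {i}ᶜ, (y j - x j) ^ 2 = ∑ j ∈ {i}ᶜ, (p j - x j) ^ 2 :=
    Finset.sum_congr rfl fun j hj => by rw [hyp j (by simpa using hj)]
  simp only [EuclideanSpace.norm_sq_eq, PiLp.sub_apply, Real.norm_eq_abs, sq_abs]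
  rw [Fintype.sum_eq_add_sum_compl i, Fintype.sum_eq_add_sum_compl i (fun j => (p j - x j) ^ 2),
    hcompl, hpi, sub_self]
  ring

lemma sub_mul_norm_sub_sq_le_of_le {E : Type*} [SeminormedAddCommGroup E]
    {f δ : E → ℝ} {xstar y z : E} {c Δ : ℝ}
    (hf : ∀ x, f x - f xstar = (c + δ x) * ‖x - xstar‖ ^ 2) (hδ : ∀ x, |δ x| ≤ Δ)
    (hfyz : f y ≤ f z) :
    (c - Δ) * ‖y - xstar‖ ^ 2 ≤ (c + Δ) * ‖z - xstar‖ ^ 2 :=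
  calc (c - Δ) * ‖y - xstar‖ ^ 2 ≤ (c + δ y) * ‖y - xstar‖ ^ 2 := by
        gcongr; linarith [neg_abs_le (δ y), hδ y]
    _ ≤ (c + δ z) * ‖z - xstar‖ ^ 2 := by linarith [hf y, hf z]
    _ ≤ (c + Δ) * ‖z - xstar‖ ^ 2 := by gcongr; linarith [le_abs_self (δ z), hδ z]

lemma sq_le_of_perturbed_growth_le {M Δ R a b P : ℝ} (hM : 0 < M) (hΔ : Δ ≤ M / 16)
    (hΔP : Δ * P ≤ M * R ^ 2 / 64) (hb : |b| ≤ R / 30)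
    (h : (M / 2 - Δ) * (a ^ 2 + P) ≤ (M / 2 + Δ) * (b ^ 2 + P)) :
    a ^ 2 ≤ 51 / 700 * R ^ 2 := by
  have hb2 : b ^ 2 ≤ (R / 30) ^ 2 := sq_le_sq' (abs_le.mp hb).1 (abs_le.mp hb).2
  have key : 7 * M / 16 * a ^ 2 ≤ 7 * M / 16 * (51 / 700 * R ^ 2) := by
    nlinarith [mul_nonneg (sub_nonneg.mpr hΔ) (sq_nonneg a),
      mul_nonneg (sub_nonneg.mpr hΔ) (sq_nonneg b), mul_le_mul_of_nonneg_left hb2 hM.le]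
  exact le_of_mul_le_mul_left key (by positivity)

/-- key estimate of Theorem 2 (Direction BBS with `n = 15`,
`Δ = M/(16(d-1))`): `(y_i - x*_i)² ≤ (51/700)R²` and consequently
`|y_i - z_i| ≤ (1/30 + √(51/700))·R ≤ R/3`. -/
theorem direction_bbs_key_estimate (d : ℕ) (hd : 2 ≤ d) (M Δ : ℝ) (hM : 0 < M)
    (hΔ : Δ = M / (16 * ((d : ℝ) - 1)))
    (R : ℝ) (hR : 0 < R)
    (f : EuclideanSpace ℝ (Fin d) → ℝ)
    (δ : EuclideanSpace ℝ (Fin d) → ℝ)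
    (xstar : EuclideanSpace ℝ (Fin d))
    (hf : ∀ x, f x - f xstar = (M / 2 + δ x) * ‖x - xstar‖ ^ 2)
    (hδbound : ∀ x, |δ x| ≤ Δ)
    (i : Fin d) (y z p : EuclideanSpace ℝ (Fin d))
    (hyz : ∀ j, j ≠ i → y j = z j) (hyp : ∀ j, j ≠ i → y j = p j)
    (hpi : p i = xstar i)
    (hfyz : f y ≤ f z)
    (hzclose : |z i - xstar i| ≤ R / 30)
    (hproj : ‖p - xstar‖ ^ 2 ≤ ((d : ℝ) - 1) * R ^ 2 / 4) :
    (y i - xstar i) ^ 2 ≤ 51 / 700 * R ^ 2 ∧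
      |y i - z i| ≤ (1 / 30 + Real.sqrt (51 / 700)) * R ∧
      (1 / 30 + Real.sqrt (51 / 700)) * R ≤ R / 3 := by
  have hd1 : (1 : ℝ) ≤ d - 1 := by
    have : (2 : ℝ) ≤ d := by exact_mod_cast hd
    linarith
  have hΔ_nonneg : 0 ≤ Δ := hΔ ▸ by positivity
  have hΔ_le : Δ ≤ M / 16 := hΔ ▸ div_le_div_of_nonneg_left hM.le (by norm_num) (by linarith)
  have hΔP : Δ * ‖p - xstar‖ ^ 2 ≤ M * R ^ 2 / 64 :=
    calc Δ * ‖p - xstar‖ ^ 2 ≤ Δ * ((d - 1) * R ^ 2 / 4) := by gcongr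
      _ = M * R ^ 2 / 64 := by rw [hΔ]; field_simp; ring
  have hzp : ∀ j, j ≠ i → z j = p j := fun j hj => (hyz j hj).symm.trans (hyp j hj)
  have hgrowth := sub_mul_norm_sub_sq_le_of_le hf hδbound hfyz
  rw [EuclideanSpace.norm_sub_sq_eq_of_eq_off hyp hpi,
    EuclideanSpace.norm_sub_sq_eq_of_eq_off hzp hpi] at hgrowth
  have hy := sq_le_of_perturbed_growth_le hM hΔ_le hΔP hzclose hgrowth
  refine ⟨hy, ?_, ?_⟩
  · have hy_abs : |y i - xstar i| ≤ √(51 / 700) * R := by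
      rw [← Real.sqrt_sq hR.le, ← Real.sqrt_mul (by norm_num)]
      exact Real.abs_le_sqrt hy
    linarith [abs_sub_le (y i) (xstar i) (z i), abs_sub_comm (xstar i) (z i)]
  · have hsqrt : √(51 / 700) ≤ 3 / 10 := (Real.sqrt_le_left (by norm_num)).mpr (by norm_num)
    linarith [mul_le_mul_of_nonneg_right hsqrt hR.le]
end

section
/- Let d ≥ 1, τ > 0, Δ ≥ 0. Let A be a real d×d matrix, x, x* ∈ ℝ^d, and let δ : ℝ^d → ℝ be measurable with |δ(x)| ≤ Δ for all x. Let e be uniformly distributed on the unit Euclidean sphere S^{d−1}, and let ξ⁺, ξ⁻ be real random variables, independent of e, with E[ξ⁺] = E[ξ⁻] = 0. Define the gradient estimator g = d·⟨A(x−x*), e⟩·e + (d/(2τ))·((ξ⁺ + δ(x+τe))·‖x+τe−x*‖ − (ξ⁻ + δ(x−τe))·‖x−τe−x*‖)·e. Then E[g] = A(x−x*) + (d/(2τ))·E[(δ(x+τe)‖x+τe−x*‖ − δ(x−τe)‖x−τe−x*‖)·e], and consequently ‖E[g] − A(x−x*)‖ ≤ (dΔ/τ)·(‖x−x*‖ +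 τ). -/
/-! If the law of `e` on the unit sphere is invariant under all linear isometries, then
`E[⟪v, e⟫ e] = v / d`: coordinate reflections kill the mixed second moments, coordinate swaps
make the diagonal ones equal, and they add up to `E‖e‖² = 1`. By independence the stochastic
noise contributes `E[ξ] • E[G(e)] = 0`, so only the deterministic noise remains; on the sphere
`‖x ± τe - x*‖ ≤ ‖x - x*‖ + τ`, which bounds that term by `2Δ(‖x - x*‖ + τ)`. -/

open MeasureTheory ProbabilityTheory

namespace EuclideanSpace

variable {ι : Type*} [Fintype ι] {μ : Measure (EuclideanSpace ℝ ι)}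

lemma integral_comp_linearIsometryEquiv (T : EuclideanSpace ℝ ι ≃ₗᵢ[ℝ] EuclideanSpace ℝ ι)
    (hT : μ.map T = μ) (f : EuclideanSpace ℝ ι → ℝ) : ∫ y, f (T y) ∂μ = ∫ y, f y ∂μ :=
  MeasurePreserving.integral_comp ⟨T.continuous.measurable, hT⟩
    T.toHomeomorph.measurableEmbedding f

lemma integrable_apply_mul_apply [IsFiniteMeasure μ] (hμ : ∀ᵐ y ∂μ, ‖y‖ = 1) (i j : ι) :
    Integrable (fun y => y i * y j) μ := by
  refine Integrable.of_bound (by fun_prop) 1 (hμ.mono fun y hy => ?_)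
  rw [norm_mul, ← one_mul 1, ← hy]
  exact mul_le_mul (PiLp.norm_apply_le y i) (PiLp.norm_apply_le y j) (norm_nonneg _)
    (norm_nonneg _)

variable (hinv : ∀ T : EuclideanSpace ℝ ι ≃ₗᵢ[ℝ] EuclideanSpace ℝ ι, μ.map T = μ)
include hinv

lemma integral_apply_mul_apply_eq_zero_of_ne {i j : ι} (hij : i ≠ j) : ∫ y, y i * y j ∂μ = 0 := by
  classical
  let T : EuclideanSpace ℝ ι ≃ₗᵢ[ℝ] EuclideanSpace ℝ ι := LinearIsometryEquiv.piLpCongrRight 2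
    fun k => if k = i then LinearIsometryEquiv.neg ℝ else LinearIsometryEquiv.refl ℝ ℝ
  have hflip := integral_comp_linearIsometryEquiv T (hinv T) fun y => y i * y j
  simp only [T, LinearIsometryEquiv.piLpCongrRight_apply, ↓reduceIte, hij.symm,
    LinearIsometryEquiv.coe_neg, LinearIsometryEquiv.coe_refl, id_eq, neg_mul, integral_neg] at hflip
  linarith

lemma integral_apply_sq_eq (i j : ι) : ∫ y, y i ^ 2 ∂μ = ∫ y, y j ^ 2 ∂μ := by
  classical
  have := integral_comp_linearIsometryEquiv
    (LinearIsometryEquiv.piLpCongrLeft 2 ℝ ℝ (Equiv.swap i j)) (hinv _) fun y => y j ^ 2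
  simpa [LinearIsometryEquiv.piLpCongrLeft_apply, Equiv.piCongrLeft'_apply, Equiv.symm_swap] using this

variable [IsProbabilityMeasure μ] (hμ : ∀ᵐ y ∂μ, ‖y‖ = 1)
include hμ

lemma card_mul_integral_apply_sq (i : ι) : (Fintype.card ι : ℝ) * ∫ y, y i ^ 2 ∂μ = 1 := by
  have hsum : ∑ j, ∫ y, y j ^ 2 ∂μ = 1 := by
    have hnorm : ∀ᵐ y ∂μ, ∑ j, y j ^ 2 = (1 : ℝ) :=
      hμ.mono fun y hy => by rw [← EuclideanSpace.real_norm_sq_eq, hy, one_pow]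
    rw [← integral_finsetSum _ fun j _ => by simpa [sq] using integrable_apply_mul_apply hμ j j,
      integral_congr_ae hnorm, integral_const, probReal_univ, one_smul]
  simpa [integral_apply_sq_eq hinv _ i] using hsum

lemma card_smul_integral_inner_smul (v : EuclideanSpace ℝ ι) :
    (Fintype.card ι : ℝ) • ∫ y, inner ℝ v y • y ∂μ = v := by
  have hint : Integrable (fun y => inner ℝ v y • y) μ :=
    Integrable.of_bound (by fun_prop) ‖v‖ (hμ.mono fun y hy => by
      simpa [norm_smul, hy] using abs_real_inner_le_norm v y)
  ext j
  have hcoord : (∫ y, inner ℝ v y • y ∂μ) j = ∑ i, v i * ∫ y, y i * y j ∂μ := by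
    calc (∫ y, inner ℝ v y • y ∂μ) j = ∫ y, inner ℝ v y * y j ∂μ :=
          ((EuclideanSpace.proj j).integral_comp_comm hint).symm
      _ = ∫ y, ∑ i, v i * (y i * y j) ∂μ := by
          simp only [PiLp.inner_apply, Real.inner_apply, Finset.sum_mul, mul_assoc]
      _ = ∑ i, v i * ∫ y, y i * y j ∂μ := by
          rw [integral_finsetSum _ fun i _ => (integrable_apply_mul_apply hμ i j).const_mul _]
          simp only [integral_const_mul]
  rw [PiLp.smul_apply, hcoord, Finset.sum_eq_single j (fun i _ hij => by
    rw [integral_apply_mul_apply_eq_zero_of_ne hinv hij, mul_zero]) (by simp), smul_eq_mul,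
    mul_left_comm]
  simp only [← sq, card_mul_integral_apply_sq hinv hμ, mul_one]

end EuclideanSpace

namespace ProbabilityTheory

lemma IndepFun.integral_smul_comp_eq_zero {Ω β E : Type*} [MeasurableSpace Ω] [MeasurableSpace β]
    [NormedAddCommGroup E] [NormedSpace ℝ E] {P : Measure Ω} {ξ : Ω → ℝ} {e : Ω → β}
    (hind : IndepFun ξ e P) (hξ : AEMeasurable ξ P) (he : AEMeasurable e P)
    (hξmean : ∫ ω, ξ ω ∂P = 0) {G : β → E} (hG : AEStronglyMeasurable G (P.map e)) :
    ∫ ω, ξ ω • G (e ω) ∂P = 0 := by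
  have := hind.integral_fun_comp_smul_comp (f := id) hξ he aestronglyMeasurable_id hG
  simpa only [id, hξmean, zero_smul] using this

end ProbabilityTheory

section CentralDifference

variable {E : Type*} [SeminormedAddCommGroup E] [NormedSpace ℝ E]

lemma norm_add_smul_sub_le (x y z : E) {τ : ℝ} (hτ : 0 ≤ τ) :
    ‖x + τ • y - z‖ ≤ ‖x - z‖ + τ * ‖y‖ := by
  calc ‖x + τ • y - z‖ = ‖(x - z) + τ • y‖ := by rw [add_sub_right_comm]
    _ ≤ ‖x - z‖ + ‖τ • y‖ := norm_add_le _ _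
    _ = ‖x - z‖ + τ * ‖y‖ := by rw [norm_smul, Real.norm_of_nonneg hτ]

lemma norm_sub_smul_sub_le (x y z : E) {τ : ℝ} (hτ : 0 ≤ τ) :
    ‖x - τ • y - z‖ ≤ ‖x - z‖ + τ * ‖y‖ := by
  simpa [sub_eq_add_neg] using norm_add_smul_sub_le x (-y) z hτ

lemma norm_centralDifference_smul_le {δ : E → ℝ} {Δ τ : ℝ} (hδ : ∀ y, |δ y| ≤ Δ) (hτ : 0 ≤ τ)
    (x z : E) {y : E} (hy : ‖y‖ = 1) :
    ‖(δ (x + τ • y) * ‖x + τ • y - z‖ - δ (x - τ • y) * ‖x - τ • y - z‖) • y‖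
      ≤ 2 * Δ * (‖x - z‖ + τ) := by
  have hΔ : 0 ≤ Δ := (abs_nonneg _).trans (hδ 0)
  have hp : ‖x + τ • y - z‖ ≤ ‖x - z‖ + τ := by simpa [hy] using norm_add_smul_sub_le x y z hτ
  have hm : ‖x - τ • y - z‖ ≤ ‖x - z‖ + τ := by simpa [hy] using norm_sub_smul_sub_le x y z hτ
  rw [norm_smul, hy, mul_one, Real.norm_eq_abs]
  calc _ ≤ |δ (x + τ • y) * ‖x + τ • y - z‖| + |δ (x - τ • y) * ‖x - τ • y - z‖| := abs_sub _ _
    _ ≤ Δ * (‖x - z‖ + τ) + Δ * (‖x - z‖ + τ) := by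
        rw [abs_mul, abs_mul, abs_norm, abs_norm]
        exact add_le_add (mul_le_mul (hδ _) hp (norm_nonneg _) hΔ)
          (mul_le_mul (hδ _) hm (norm_nonneg _) hΔ)
    _ = 2 * Δ * (‖x - z‖ + τ) := by ring

end CentralDifference

theorem gradient_estimator_bias_general (d : ℕ) (τ Δ : ℝ)
    (hτ : 0 < τ)
    (A : Matrix (Fin d) (Fin d) ℝ)
    (x xstar : EuclideanSpace ℝ (Fin d))
    (δ : EuclideanSpace ℝ (Fin d) → ℝ) (hδmeas : Measurable δ)
    (hδbound : ∀ y, |δ y| ≤ Δ)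
    (Ω : Type*) [MeasurableSpace Ω] (P : Measure Ω) [IsProbabilityMeasure P]
    (e : Ω → EuclideanSpace ℝ (Fin d)) (he : Measurable e)
    (hesphere : (P.map e) (Metric.sphere (0 : EuclideanSpace ℝ (Fin d)) 1)ᶜ = 0)
    (heinv : ∀ T : EuclideanSpace ℝ (Fin d) ≃ₗᵢ[ℝ] EuclideanSpace ℝ (Fin d),
      (P.map e).map T = P.map e)
    (ξp ξm : Ω → ℝ)
    (hξpint : Integrable ξp P) (hξmint : Integrable ξm P)
    (hξpmean : ∫ ω, ξp ω ∂P = 0) (hξmmean : ∫ ω, ξm ω ∂P = 0)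
    (hindp : IndepFun ξp e P) (hindm : IndepFun ξm e P)
    (g : Ω → EuclideanSpace ℝ (Fin d))
    (hg : ∀ ω, g ω =
      (d : ℝ) • (inner ℝ (Matrix.toEuclideanLin A (x - xstar)) (e ω) : ℝ) • e ω
      + ((d : ℝ) / (2 * τ)) •
        ((ξp ω + δ (x + τ • e ω)) * ‖x + τ • e ω - xstar‖
          - (ξm ω + δ (x - τ • e ω)) * ‖x - τ • e ω - xstar‖) • e ω) :
    (∫ ω, g ω ∂P) = Matrix.toEuclideanLin A (x - xstar)
        + ((d : ℝ) / (2 * τ)) •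
          ∫ ω, (δ (x + τ • e ω) * ‖x + τ • e ω - xstar‖
            - δ (x - τ • e ω) * ‖x - τ • e ω - xstar‖) • e ω ∂P
      ∧ ‖(∫ ω, g ω ∂P) - Matrix.toEuclideanLin A (x - xstar)‖
          ≤ (d : ℝ) * Δ / τ * (‖x - xstar‖ + τ) := by
  set v := Matrix.toEuclideanLin A (x - xstar)
  set C := ‖x - xstar‖ + τ
  let S y := (d : ℝ) • inner ℝ v y • y
  let Np y := ‖x + τ • y - xstar‖ • y
  let Nm y := ‖x - τ • y - xstar‖ • y
  let B y := (δ (x + τ • y) * ‖x + τ • y - xstar‖ - δ (x - τ • y) * ‖x - τ • y - xstar‖) • y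
  have : IsProbabilityMeasure (P.map e) := Measure.isProbabilityMeasure_map he.aemeasurable
  have hsphere : ∀ᵐ y ∂P.map e, y ∈ Metric.sphere 0 1 := mem_ae_iff.2 hesphere
  have hμ : ∀ᵐ y ∂P.map e, ‖y‖ = 1 := hsphere.mono fun _ => mem_sphere_zero_iff_norm.1
  have hae : ∀ᵐ ω ∂P, ‖e ω‖ = 1 := ae_of_ae_map he.aemeasurable hμ
  have hS : Integrable (fun ω => S (e ω)) P :=
    Integrable.of_bound (by fun_prop) (d * ‖v‖) (hae.mono fun ω hω => by
      simpa [S, norm_smul, hω] using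
        mul_le_mul_of_nonneg_left (abs_real_inner_le_norm v (e ω)) d.cast_nonneg)
  have hSint : ∫ ω, S (e ω) ∂P = v := by
    rw [← integral_map he.aemeasurable (by fun_prop), integral_smul]
    simpa using EuclideanSpace.card_smul_integral_inner_smul heinv hμ v
  have hB : ∀ᵐ ω ∂P, ‖B (e ω)‖ ≤ 2 * Δ * C :=
    hae.mono fun ω hω => norm_centralDifference_smul_le hδbound hτ.le x xstar hω
  have hNp : Integrable (fun ω => ξp ω • Np (e ω)) P := by
    refine hξpint.smul_bdd C (by fun_prop) (hae.mono fun ω hω => ?_)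
    simpa [Np, norm_smul, hω] using norm_add_smul_sub_le x (e ω) xstar hτ.le
  have hNm : Integrable (fun ω => ξm ω • Nm (e ω)) P := by
    refine hξmint.smul_bdd C (by fun_prop) (hae.mono fun ω hω => ?_)
    simpa [Nm, norm_smul, hω] using norm_sub_smul_sub_le x (e ω) xstar hτ.le
  have hBint : Integrable (fun ω => B (e ω)) P := Integrable.of_bound
    ((by fun_prop : Measurable B).comp he).aestronglyMeasurable _ hB
  have hmean : ∫ ω, g ω ∂P = v + ((d : ℝ) / (2 * τ)) • ∫ ω, B (e ω) ∂P := by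
    have hsplit : ∀ ω, g ω = S (e ω) +
        ((d : ℝ) / (2 * τ)) • (ξp ω • Np (e ω) - ξm ω • Nm (e ω) + B (e ω)) :=
      fun ω => by rw [hg]; module
    have hN : Integrable (fun ω => ξp ω • Np (e ω) - ξm ω • Nm (e ω)) P := hNp.sub hNm
    rw [integral_congr_ae (.of_forall hsplit), integral_add hS, hSint, integral_smul,
      integral_add hN hBint, integral_sub hNp hNm,
      hindp.integral_smul_comp_eq_zero hξpint.aemeasurable he.aemeasurable hξpmean (by fun_prop),
      hindm.integral_smul_comp_eq_zero hξmint.aemeasurable he.aemeasurable hξmmean (by fun_prop),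
      sub_self, zero_add]
    exact (hN.add hBint).smul ((d : ℝ) / (2 * τ))
  refine ⟨hmean, ?_⟩
  calc ‖(∫ ω, g ω ∂P) - v‖ = (d : ℝ) / (2 * τ) * ‖∫ ω, B (e ω) ∂P‖ := by
        rw [hmean, add_sub_cancel_left, norm_smul, Real.norm_of_nonneg (by positivity)]
    _ ≤ (d : ℝ) / (2 * τ) * (2 * Δ * C) := by
        gcongr
        simpa using norm_integral_le_of_norm_le_const hB
    _ = (d : ℝ) * Δ / τ * C := by field_simp

/-- the finite-difference gradient estimator
`g = d⟨A(x-x*),e⟩e + (d/(2τ))((ξ⁺+δ(x+τe))‖x+τe-x*‖ - (ξ⁻+δ(x-τe))‖x-τe-x*‖)e`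
with `e` uniform on the unit sphere and zero-mean noises `ξ⁺, ξ⁻` independent
of `e` satisfies
`E[g] = A(x-x*) + (d/(2τ))E[(δ(x+τe)‖x+τe-x*‖ - δ(x-τe)‖x-τe-x*‖)e]` and
`‖E[g] - A(x-x*)‖ ≤ (dΔ/τ)(‖x-x*‖ + τ)`. -/
theorem gradient_estimator_bias (d : ℕ) (hd : 1 ≤ d) (τ Δ : ℝ)
    (hτ : 0 < τ) (hΔ : 0 ≤ Δ)
    (A : Matrix (Fin d) (Fin d) ℝ)
    (x xstar : EuclideanSpace ℝ (Fin d))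
    (δ : EuclideanSpace ℝ (Fin d) → ℝ) (hδmeas : Measurable δ)
    (hδbound : ∀ y, |δ y| ≤ Δ)
    (Ω : Type*) [MeasurableSpace Ω] (P : Measure Ω) [IsProbabilityMeasure P]
    (e : Ω → EuclideanSpace ℝ (Fin d)) (he : Measurable e)
    (hesphere : (P.map e) (Metric.sphere (0 : EuclideanSpace ℝ (Fin d)) 1)ᶜ = 0)
    (heinv : ∀ T : EuclideanSpace ℝ (Fin d) ≃ₗᵢ[ℝ] EuclideanSpace ℝ (Fin d),
      (P.map e).map T = P.map e)
    (ξp ξm : Ω → ℝ) (hξpmeas : Measurable ξp) (hξmmeas : Measurable ξm)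
    (hξpint : Integrable ξp P) (hξmint : Integrable ξm P)
    (hξpmean : ∫ ω, ξp ω ∂P = 0) (hξmmean : ∫ ω, ξm ω ∂P = 0)
    (hindp : IndepFun ξp e P) (hindm : IndepFun ξm e P)
    (g : Ω → EuclideanSpace ℝ (Fin d))
    (hg : ∀ ω, g ω =
      (d : ℝ) • (inner ℝ (Matrix.toEuclideanLin A (x - xstar)) (e ω) : ℝ) • e ω
      + ((d : ℝ) / (2 * τ)) •
        ((ξp ω + δ (x + τ • e ω)) * ‖x + τ • e ω - xstar‖
          - (ξm ω + δ (x - τ • e ω)) * ‖x - τ • e ω - xstar‖) • e ω) :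
    (∫ ω, g ω ∂P) = Matrix.toEuclideanLin A (x - xstar)
        + ((d : ℝ) / (2 * τ)) •
          ∫ ω, (δ (x + τ • e ω) * ‖x + τ • e ω - xstar‖
            - δ (x - τ • e ω) * ‖x - τ • e ω - xstar‖) • e ω ∂P
      ∧ ‖(∫ ω, g ω ∂P) - Matrix.toEuclideanLin A (x - xstar)‖
          ≤ (d : ℝ) * Δ / τ * (‖x - xstar‖ + τ) :=
  gradient_estimator_bias_general d τ Δ hτ A x xstar δ hδmeas hδbound Ω P e he hesphere heinv ξp ξm
    hξpint hξmint hξpmean hξmmean hindp hindm g hg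
end

section
/- Let d ≥ 1, τ > 0, Δ ≥ 0, σ ≥ 0. Let A be a real d×d matrix, x, x* ∈ ℝ^d, and let δ : ℝ^d → ℝ be measurable with |δ(x)| ≤ Δ for all x. Let e be uniformly distributed on the unit Euclidean sphere S^{d−1}, and let ξ⁺, ξ⁻ be real random variables, independent of e, with E[(ξ⁺)²] ≤ σ² and E[(ξ⁻)²] ≤ σ². Define g = d·⟨A(x−x*), e⟩·e + (d/(2τ))·((ξ⁺ + δ(x+τe))·‖x+τe−x*‖ − (ξ⁻ + δ(x−τe))·‖x−τe−x*‖)·e. Then E[‖g‖²] ≤ 5d·‖A(x−x*)‖² + (5d²(Δ² + σ²)/τ²)·‖x−x*‖² + 5d²(Δ² + σ²). -/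
/-!
On the unit sphere `‖g‖` is the absolute value of the scalar coefficient of `e`, a sum of five
terms; `(a₁ + ⋯ + a₅)² ≤ 5 ∑ aᵢ²`, `|δ| ≤ Δ` and `‖x ± τe - x*‖² ≤ 2‖x - x*‖² + 2τ²` bound its
square pointwise. Taking expectations leaves `E ⟪s, e⟫²`, which equals `‖s‖² / d` by rotation
invariance: reflections move any vector to any other of the same norm, so all directions carry
the same second moment, and these sum to `E ‖e‖² = 1` over an orthonormal basis.
-/

open MeasureTheory ProbabilityTheory

open scoped RealInnerProductSpace

section SphereSecondMoment

variable {E : Type*} [NormedAddCommGroup E] [InnerProductSpace ℝ E]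
  [MeasurableSpace E] [BorelSpace E] {μ : Measure E}

lemma integrable_inner_sq_of_ae_norm_eq_one [IsFiniteMeasure μ] (hμ : ∀ᵐ u ∂μ, ‖u‖ = 1)
    (s : E) : Integrable (fun u => ⟪s, u⟫ ^ 2) μ := by
  refine .of_bound (by fun_prop) (‖s‖ ^ 2) ?_
  filter_upwards [hμ] with u hu
  rw [Real.norm_eq_abs, abs_pow]
  gcongr
  simpa [hu] using abs_real_inner_le_norm s u

lemma integral_inner_sq_eq_of_norm_eq
    (hinv : ∀ T : E ≃ₗᵢ[ℝ] E, μ.map T = μ) {a b : E} (hab : ‖a‖ = ‖b‖) :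
    ∫ u, ⟪a, u⟫ ^ 2 ∂μ = ∫ u, ⟪b, u⟫ ^ 2 ∂μ := by
  set T := Submodule.reflection (ℝ ∙ (a - b))ᗮ
  calc ∫ u, ⟪a, u⟫ ^ 2 ∂μ = ∫ u, ⟪T a, T u⟫ ^ 2 ∂μ := by
        simp only [LinearIsometryEquiv.inner_map_map]
    _ = ∫ u, ⟪T a, u⟫ ^ 2 ∂μ.map T := by
        rw [integral_map T.continuous.aemeasurable (by fun_prop)]
    _ = ∫ u, ⟪b, u⟫ ^ 2 ∂μ := by rw [hinv T, Submodule.reflection_sub hab]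

variable [IsProbabilityMeasure μ]

lemma OrthonormalBasis.sum_integral_inner_sq_eq_one {ι : Type*} [Fintype ι]
    (b : OrthonormalBasis ι ℝ E) (hμ : ∀ᵐ u ∂μ, ‖u‖ = 1) : ∑ i, ∫ u, ⟪b i, u⟫ ^ 2 ∂μ = 1 := by
  rw [← integral_finsetSum _ fun i _ => integrable_inner_sq_of_ae_norm_eq_one hμ (b i)]
  calc ∫ u, ∑ i, ⟪b i, u⟫ ^ 2 ∂μ = ∫ _, (1 : ℝ) ∂μ := by
        refine integral_congr_ae ?_
        filter_upwards [hμ] with u hu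
        rw [b.sum_sq_inner_right, hu, one_pow]
    _ = 1 := by simp

lemma integral_inner_sq_eq_norm_sq_div_finrank [FiniteDimensional ℝ E]
    (hμ : ∀ᵐ u ∂μ, ‖u‖ = 1) (hinv : ∀ T : E ≃ₗᵢ[ℝ] E, μ.map T = μ) (s : E) :
    ∫ u, ⟪s, u⟫ ^ 2 ∂μ = ‖s‖ ^ 2 / Module.finrank ℝ E := by
  set b := stdOrthonormalBasis ℝ E
  have hsum := b.sum_integral_inner_sq_eq_one hμ
  have hterm : ∀ i, ‖s‖ ^ 2 * ∫ u, ⟪b i, u⟫ ^ 2 ∂μ = ∫ u, ⟪s, u⟫ ^ 2 ∂μ := by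
    intro i
    rw [← integral_const_mul]
    calc ∫ u, ‖s‖ ^ 2 * ⟪b i, u⟫ ^ 2 ∂μ = ∫ u, ⟪‖s‖ • b i, u⟫ ^ 2 ∂μ := by
          simp only [real_inner_smul_left, mul_pow]
      _ = ∫ u, ⟪s, u⟫ ^ 2 ∂μ :=
          integral_inner_sq_eq_of_norm_eq hinv (by simp [norm_smul, b.orthonormal.1 i])
  have hcard : (Module.finrank ℝ E : ℝ) * ∫ u, ⟪s, u⟫ ^ 2 ∂μ = ‖s‖ ^ 2 := by
    calc (Module.finrank ℝ E : ℝ) * ∫ u, ⟪s, u⟫ ^ 2 ∂μ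
        = ∑ i, ‖s‖ ^ 2 * ∫ u, ⟪b i, u⟫ ^ 2 ∂μ := by simp [hterm]
      _ = ‖s‖ ^ 2 := by rw [← Finset.mul_sum, hsum, mul_one]
  have hne : (Module.finrank ℝ E : ℝ) ≠ 0 := by
    intro h0
    have : IsEmpty (Fin (Module.finrank ℝ E)) := by
      rw [Nat.cast_eq_zero.mp h0]; infer_instance
    simp at hsum
  rw [eq_div_iff hne, mul_comm, hcard]

variable {Ω : Type*} [MeasurableSpace Ω] {P : Measure Ω} [IsProbabilityMeasure P] {e : Ω → E}

lemma integrable_inner_sq_comp (he : AEMeasurable e P) (hμ : ∀ᵐ u ∂P.map e, ‖u‖ = 1) (s : E) :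
    Integrable (fun ω => ⟪s, e ω⟫ ^ 2) P :=
  have := Measure.isProbabilityMeasure_map he
  (integrable_map_measure (by fun_prop) he).1 (integrable_inner_sq_of_ae_norm_eq_one hμ s)

lemma integral_inner_sq_comp [FiniteDimensional ℝ E] (he : AEMeasurable e P)
    (hμ : ∀ᵐ u ∂P.map e, ‖u‖ = 1) (hinv : ∀ T : E ≃ₗᵢ[ℝ] E, (P.map e).map T = P.map e) (s : E) :
    ∫ ω, ⟪s, e ω⟫ ^ 2 ∂P = ‖s‖ ^ 2 / Module.finrank ℝ E := by
  have := Measure.isProbabilityMeasure_map he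
  rw [← integral_inner_sq_eq_norm_sq_div_finrank hμ hinv,
    integral_map he (f := fun u => ⟪s, u⟫ ^ 2) (by fun_prop)]

end SphereSecondMoment

lemma add_five_sq_le (a b c u v : ℝ) :
    (a + b + c + u + v) ^ 2 ≤ 5 * (a ^ 2 + b ^ 2 + c ^ 2 + u ^ 2 + v ^ 2) := by
  simpa [Fin.sum_univ_five, add_assoc] using
    sq_sum_le_card_mul_sum_sq (s := Finset.univ) (f := ![a, b, c, u, v])

lemma sq_add_mul_sub_le {a k p m δp δm np nm Δ B : ℝ} (hδp : |δp| ≤ Δ) (hδm : |δm| ≤ Δ)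
    (hnp : np ^ 2 ≤ B) (hnm : nm ^ 2 ≤ B) :
    (a + k * ((p + δp) * np - (m + δm) * nm)) ^ 2
      ≤ 5 * a ^ 2 + 5 * k ^ 2 * B * (p ^ 2 + m ^ 2 + 2 * Δ ^ 2) := by
  have hδp2 : δp ^ 2 ≤ Δ ^ 2 := sq_le_sq' (abs_le.1 hδp).1 (abs_le.1 hδp).2
  have hδm2 : δm ^ 2 ≤ Δ ^ 2 := sq_le_sq' (abs_le.1 hδm).1 (abs_le.1 hδm).2
  calc (a + k * ((p + δp) * np - (m + δm) * nm)) ^ 2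
      = (a + k * p * np + k * δp * np + -(k * m * nm) + -(k * δm * nm)) ^ 2 := by ring
    _ ≤ 5 * (a ^ 2 + (k * p * np) ^ 2 + (k * δp * np) ^ 2 + (-(k * m * nm)) ^ 2
          + (-(k * δm * nm)) ^ 2) := add_five_sq_le ..
    _ = 5 * (a ^ 2 + k ^ 2 * (p ^ 2 * np ^ 2 + δp ^ 2 * np ^ 2 + m ^ 2 * nm ^ 2
          + δm ^ 2 * nm ^ 2)) := by ring
    _ ≤ 5 * (a ^ 2 + k ^ 2 * (p ^ 2 * B + Δ ^ 2 * B + m ^ 2 * B + Δ ^ 2 * B)) := by gcongr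
    _ = 5 * a ^ 2 + 5 * k ^ 2 * B * (p ^ 2 + m ^ 2 + 2 * Δ ^ 2) := by ring

lemma norm_add_sq_le_two_mul {E : Type*} [SeminormedAddCommGroup E] (a b : E) :
    ‖a + b‖ ^ 2 ≤ 2 * (‖a‖ ^ 2 + ‖b‖ ^ 2) :=
  (pow_le_pow_left₀ (norm_nonneg _) (norm_add_le a b) 2).trans add_sq_le

lemma norm_sub_sq_le_two_mul {E : Type*} [SeminormedAddCommGroup E] (a b : E) :
    ‖a - b‖ ^ 2 ≤ 2 * (‖a‖ ^ 2 + ‖b‖ ^ 2) :=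
  (pow_le_pow_left₀ (norm_nonneg _) (norm_sub_le a b) 2).trans add_sq_le

section Estimator

variable {E : Type*} [NormedAddCommGroup E] [InnerProductSpace ℝ E]

lemma norm_finiteDifference_sq_le {x xstar u : E} (hu : ‖u‖ = 1) {Δ : ℝ} {δ : E → ℝ}
    (hδ : ∀ y, |δ y| ≤ Δ) (a c k τ p m : ℝ) :
    ‖a • c • u + k • ((p + δ (x + τ • u)) * ‖x + τ • u - xstar‖
        - (m + δ (x - τ • u)) * ‖x - τ • u - xstar‖) • u‖ ^ 2
      ≤ 5 * a ^ 2 * c ^ 2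
        + 5 * k ^ 2 * (2 * ‖x - xstar‖ ^ 2 + 2 * τ ^ 2) * (p ^ 2 + m ^ 2 + 2 * Δ ^ 2) := by
  have hτu : ‖τ • u‖ ^ 2 = τ ^ 2 := by rw [norm_smul, hu, mul_one, Real.norm_eq_abs, sq_abs]
  have hplus : ‖x + τ • u - xstar‖ ^ 2 ≤ 2 * ‖x - xstar‖ ^ 2 + 2 * τ ^ 2 := by
    rw [add_sub_right_comm, ← hτu, ← mul_add]; exact norm_add_sq_le_two_mul _ _
  have hminus : ‖x - τ • u - xstar‖ ^ 2 ≤ 2 * ‖x - xstar‖ ^ 2 + 2 * τ ^ 2 := by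
    rw [sub_right_comm, ← hτu, ← mul_add]; exact norm_sub_sq_le_two_mul _ _
  rw [smul_smul, smul_smul, ← add_smul, norm_smul, hu, mul_one, Real.norm_eq_abs, sq_abs]
  exact (sq_add_mul_sub_le (hδ _) (hδ _) hplus hminus).trans_eq (by ring)

end Estimator

theorem gradient_estimator_second_moment_general (d : ℕ) (τ Δ σ : ℝ)
    (hτ : 0 < τ)
    (A : Matrix (Fin d) (Fin d) ℝ)
    (x xstar : EuclideanSpace ℝ (Fin d))
    (δ : EuclideanSpace ℝ (Fin d) → ℝ)
    (hδbound : ∀ y, |δ y| ≤ Δ)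
    (Ω : Type*) [MeasurableSpace Ω] (P : Measure Ω) [IsProbabilityMeasure P]
    (e : Ω → EuclideanSpace ℝ (Fin d)) (he : Measurable e)
    (hesphere : (P.map e) (Metric.sphere (0 : EuclideanSpace ℝ (Fin d)) 1)ᶜ = 0)
    (heinv : ∀ T : EuclideanSpace ℝ (Fin d) ≃ₗᵢ[ℝ] EuclideanSpace ℝ (Fin d),
      (P.map e).map T = P.map e)
    (ξp ξm : Ω → ℝ)
    (hξpL2 : MemLp ξp 2 P) (hξmL2 : MemLp ξm 2 P)
    (hξpvar : ∫ ω, (ξp ω) ^ 2 ∂P ≤ σ ^ 2) (hξmvar : ∫ ω, (ξm ω) ^ 2 ∂P ≤ σ ^ 2)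
    (g : Ω → EuclideanSpace ℝ (Fin d))
    (hg : ∀ ω, g ω =
      (d : ℝ) • (inner ℝ (Matrix.toEuclideanLin A (x - xstar)) (e ω) : ℝ) • e ω
      + ((d : ℝ) / (2 * τ)) •
        ((ξp ω + δ (x + τ • e ω)) * ‖x + τ • e ω - xstar‖
          - (ξm ω + δ (x - τ • e ω)) * ‖x - τ • e ω - xstar‖) • e ω) :
    ∫ ω, ‖g ω‖ ^ 2 ∂P ≤
      5 * d * ‖Matrix.toEuclideanLin A (x - xstar)‖ ^ 2
        + 5 * d ^ 2 * (Δ ^ 2 + σ ^ 2) / τ ^ 2 * ‖x - xstar‖ ^ 2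
        + 5 * d ^ 2 * (Δ ^ 2 + σ ^ 2) := by
  set s := Matrix.toEuclideanLin A (x - xstar)
  set C := 5 * ((d : ℝ) / (2 * τ)) ^ 2 * (2 * ‖x - xstar‖ ^ 2 + 2 * τ ^ 2)
  have hμ : ∀ᵐ u ∂P.map e, ‖u‖ = 1 := by
    filter_upwards [mem_ae_iff.2 hesphere] with u hu
    simpa using hu
  have hbound : ∀ᵐ ω ∂P, ‖g ω‖ ^ 2
      ≤ 5 * d ^ 2 * ⟪s, e ω⟫ ^ 2 + C * (ξp ω ^ 2 + ξm ω ^ 2 + 2 * Δ ^ 2) := by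
    filter_upwards [ae_of_ae_map he.aemeasurable hμ] with ω hω
    rw [hg]
    exact (norm_finiteDifference_sq_le hω hδbound ..).trans_eq (by ring)
  have hξ2 : Integrable (fun ω => ξp ω ^ 2 + ξm ω ^ 2) P :=
    hξpL2.integrable_sq.add hξmL2.integrable_sq
  have hinner : Integrable (fun ω => 5 * d ^ 2 * ⟪s, e ω⟫ ^ 2) P :=
    (integrable_inner_sq_comp he.aemeasurable hμ s).const_mul _
  have hξ : Integrable (fun ω => C * (ξp ω ^ 2 + ξm ω ^ 2 + 2 * Δ ^ 2)) P :=
    (hξ2.add (integrable_const _)).const_mul _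
  calc ∫ ω, ‖g ω‖ ^ 2 ∂P
      ≤ ∫ ω, (5 * d ^ 2 * ⟪s, e ω⟫ ^ 2 + C * (ξp ω ^ 2 + ξm ω ^ 2 + 2 * Δ ^ 2)) ∂P :=
        integral_mono_of_nonneg (.of_forall fun _ => by positivity) (hinner.add hξ) hbound
    _ = 5 * d ^ 2 * (‖s‖ ^ 2 / d)
          + C * (∫ ω, ξp ω ^ 2 ∂P + ∫ ω, ξm ω ^ 2 ∂P + 2 * Δ ^ 2) := by
        rw [integral_add hinner hξ, integral_const_mul, integral_const_mul,
          integral_inner_sq_comp he.aemeasurable hμ heinv, finrank_euclideanSpace_fin,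
          integral_add hξ2 (integrable_const _),
          integral_add hξpL2.integrable_sq hξmL2.integrable_sq]
        simp
    _ ≤ 5 * d ^ 2 * (‖s‖ ^ 2 / d) + C * (σ ^ 2 + σ ^ 2 + 2 * Δ ^ 2) := by gcongr
    _ = _ := by
        rcases eq_or_ne (d : ℝ) 0 with hd | hd
        · simp [C, hd]
        · simp only [C]
          field_simp
          ring

/-- second-moment bound for the finite-difference gradient
estimator: if `E[(ξ⁺)²] ≤ σ²`, `E[(ξ⁻)²] ≤ σ²`, `|δ| ≤ Δ`, then
`E[‖g‖²] ≤ 5d‖A(x-x*)‖² + (5d²(Δ²+σ²)/τ²)‖x-x*‖² + 5d²(Δ²+σ²)`. -/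
theorem gradient_estimator_second_moment (d : ℕ) (hd : 1 ≤ d) (τ Δ σ : ℝ)
    (hτ : 0 < τ) (hΔ : 0 ≤ Δ) (hσ : 0 ≤ σ)
    (A : Matrix (Fin d) (Fin d) ℝ)
    (x xstar : EuclideanSpace ℝ (Fin d))
    (δ : EuclideanSpace ℝ (Fin d) → ℝ) (hδmeas : Measurable δ)
    (hδbound : ∀ y, |δ y| ≤ Δ)
    (Ω : Type*) [MeasurableSpace Ω] (P : Measure Ω) [IsProbabilityMeasure P]
    (e : Ω → EuclideanSpace ℝ (Fin d)) (he : Measurable e)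
    (hesphere : (P.map e) (Metric.sphere (0 : EuclideanSpace ℝ (Fin d)) 1)ᶜ = 0)
    (heinv : ∀ T : EuclideanSpace ℝ (Fin d) ≃ₗᵢ[ℝ] EuclideanSpace ℝ (Fin d),
      (P.map e).map T = P.map e)
    (ξp ξm : Ω → ℝ) (hξpmeas : Measurable ξp) (hξmmeas : Measurable ξm)
    (hξpL2 : MemLp ξp 2 P) (hξmL2 : MemLp ξm 2 P)
    (hξpvar : ∫ ω, (ξp ω) ^ 2 ∂P ≤ σ ^ 2) (hξmvar : ∫ ω, (ξm ω) ^ 2 ∂P ≤ σ ^ 2)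
    (hindp : IndepFun ξp e P) (hindm : IndepFun ξm e P)
    (g : Ω → EuclideanSpace ℝ (Fin d))
    (hg : ∀ ω, g ω =
      (d : ℝ) • (inner ℝ (Matrix.toEuclideanLin A (x - xstar)) (e ω) : ℝ) • e ω
      + ((d : ℝ) / (2 * τ)) •
        ((ξp ω + δ (x + τ • e ω)) * ‖x + τ • e ω - xstar‖
          - (ξm ω + δ (x - τ • e ω)) * ‖x - τ • e ω - xstar‖) • e ω) :
    ∫ ω, ‖g ω‖ ^ 2 ∂P ≤
      5 * d * ‖Matrix.toEuclideanLin A (x - xstar)‖ ^ 2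
        + 5 * d ^ 2 * (Δ ^ 2 + σ ^ 2) / τ ^ 2 * ‖x - xstar‖ ^ 2
        + 5 * d ^ 2 * (Δ ^ 2 + σ ^ 2) :=
  gradient_estimator_second_moment_general d τ Δ σ hτ A x xstar δ hδbound Ω P e he hesphere heinv ξp
    ξm hξpL2 hξmL2 hξpvar hξmvar g hg
end

section
/- Let d ≥ 1, 0 < μ ≤ L, and let A be a real symmetric d×d matrix with μ‖v‖² ≤ vᵀAv ≤ L‖v‖² for all v ∈ ℝ^d. Let x, x* ∈ ℝ^d, τ > 0, Δ ≥ 0, σ ≥ 0, and δ : ℝ^d → ℝ measurable with |δ(x)| ≤ Δ for all x. Let e be uniformly distributed on the unit Euclidean sphere S^{d−1}, and ξ⁺, ξ⁻ real random variables independent of e with E[ξ⁺] = E[ξ⁻] = 0, E[(ξ⁺)²] ≤ σ², E[(ξ⁻)²] ≤ σ². Define g = d·⟨A(x−x*), e⟩·e + (d/(2τ))·((ξ⁺ + δ(x+τe))·‖x+τe−x*‖ − (ξ⁻ + δ(x−τe))·‖x−τe−x*‖)·e. Then for every step size 0 < γ ≤ 1/(5dL), E[‖x − γg − x*‖²] ≤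 (1 − γμ + 5d²γ²(Δ² + σ²)/τ² + 2dγΔ/τ)·‖x−x*‖² + 2dγΔ·‖x−x*‖ + 5d²γ²(Δ² + σ²). -/
/-!
Write `v = x - x*`, so that `g = s • e` for a scalar `s`. As `‖e‖ = 1`,
`‖x - γ g - x*‖² = ‖v‖² - 2γ s ⟪v, e⟫ + γ² s²`, and Young's inequality
`(X + Y)² ≤ 5X² + (5/4)Y²` (the source of the constant 5) bounds this pointwise by a function
that is quadratic in `e` plus terms linear and quadratic in the noises. In expectation the terms
linear in a noise vanish by independence, and invariance of the law of `e` under coordinate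
reflections and permutations gives `d E[⟪a, e⟫⟪b, e⟫] = ⟪a, b⟫`, so the gradient part contributes
`-2γ⟪Av, v⟫ + 5dγ²‖Av‖²`. Finally `‖Av‖² ≤ L⟪Av, v⟫` (Cauchy–Schwarz for `0 ⪯ A ⪯ L`) and
`5dLγ ≤ 1` give `5dγ²‖Av‖² ≤ γ⟪Av, v⟫`, and `μ‖v‖² ≤ ⟪Av, v⟫` finishes.
-/

open MeasureTheory ProbabilityTheory

section Positive

variable {E : Type*} [NormedAddCommGroup E] [InnerProductSpace ℝ E] {T : E →ₗ[ℝ] E}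

theorem LinearMap.IsPositive.inner_map_sq_le (hT : T.IsPositive) (u w : E) :
    inner ℝ (T u) w ^ 2 ≤ inner ℝ (T u) u * inner ℝ (T w) w := by
  have hquad : ∀ t : ℝ,
      0 ≤ inner ℝ (T w) w * (t * t) + 2 * inner ℝ (T u) w * t + inner ℝ (T u) u := fun t => by
    have hwu : inner ℝ (T w) u = inner ℝ (T u) w := by rw [hT.isSymmetric w u, real_inner_comm]
    have := hT.inner_nonneg_left (u + t • w)
    simp only [map_add, map_smul, inner_add_left, inner_add_right, real_inner_smul_left,
      real_inner_smul_right, hwu] at this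
    linarith
  have := discrim_le_zero hquad
  rw [discrim] at this
  linarith

theorem LinearMap.IsPositive.norm_map_sq_le (hT : T.IsPositive) {L : ℝ}
    (hL : ∀ u, inner ℝ (T u) u ≤ L * ‖u‖ ^ 2) (v : E) :
    ‖T v‖ ^ 2 ≤ L * inner ℝ (T v) v := by
  have hCS := hT.inner_map_sq_le v (T v)
  rw [real_inner_self_eq_norm_sq] at hCS
  have hTT := mul_le_mul_of_nonneg_left (hL (T v)) (hT.inner_nonneg_left v)
  rcases eq_or_ne (T v) 0 with h | h
  · simp [h]
  · have : 0 < ‖T v‖ ^ 2 := by positivity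
    nlinarith

end Positive

theorem Continuous.integrable_of_ae_mem_compact {X : Type*} [TopologicalSpace X] [T2Space X]
    [MeasurableSpace X] [OpensMeasurableSpace X] {μ : Measure X} [IsFiniteMeasure μ]
    {K : Set X} (hK : IsCompact K) (hμK : ∀ᵐ x ∂μ, x ∈ K) {f : X → ℝ} (hf : Continuous f) :
    Integrable f μ := by
  rw [← Measure.restrict_eq_self_of_ae_mem hμK]
  exact hf.continuousOn.integrableOn_compact hK

theorem integral_mul_comp_eq_zero_of_indepFun {Ω β : Type*} [MeasurableSpace Ω]
    [MeasurableSpace β] {P : Measure Ω} {ξ : Ω → ℝ} {e : Ω → β} (hind : IndepFun ξ e P)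
    (hξ : AEStronglyMeasurable ξ P) (hmean : ∫ ω, ξ ω ∂P = 0) (he : Measurable e)
    {h : β → ℝ} (hh : Measurable h) : ∫ ω, ξ ω * h (e ω) ∂P = 0 := by
  simpa [hmean] using (hind.comp measurable_id hh).integral_fun_mul_eq_mul_integral hξ
    (hh.comp he).aestronglyMeasurable

section Isotropy

variable {ι : Type*} [Fintype ι] {ν : Measure (EuclideanSpace ℝ ι)}
  (hs : ν (Metric.sphere 0 1)ᶜ = 0)
  (hinv : ∀ T : EuclideanSpace ℝ ι ≃ₗᵢ[ℝ] EuclideanSpace ℝ ι, ν.map T = ν)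

include hs in
theorem ae_mem_sphere_of_measure_compl : ∀ᵐ y ∂ν, y ∈ Metric.sphere 0 1 :=
  measure_eq_zero_iff_ae_notMem.mp hs |>.mono fun _ hy => by simpa using hy

theorem integral_comp_linearIsometryEquiv_of_map_eq
    (T : EuclideanSpace ℝ ι ≃ₗᵢ[ℝ] EuclideanSpace ℝ ι) (hT : ν.map T = ν)
    (f : EuclideanSpace ℝ ι → ℝ) : ∫ y, f (T y) ∂ν = ∫ y, f y ∂ν := by
  conv_rhs => rw [← hT]
  exact (integral_map_equiv T.toHomeomorph.toMeasurableEquiv f).symm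

include hinv in
theorem integral_apply_mul_apply_of_ne {i j : ι} (hij : i ≠ j) :
    ∫ y : EuclideanSpace ℝ ι, y i * y j ∂ν = 0 := by
  classical
  let R : EuclideanSpace ℝ ι ≃ₗᵢ[ℝ] EuclideanSpace ℝ ι := LinearIsometryEquiv.piLpCongrRight 2
    fun k => if k = i then LinearIsometryEquiv.neg ℝ else LinearIsometryEquiv.refl ℝ ℝ
  have hR : ∀ y, R y i * R y j = -(y i * y j) := fun y => by
    simp [R, LinearIsometryEquiv.piLpCongrRight_apply, hij.symm]
  have := integral_comp_linearIsometryEquiv_of_map_eq R (hinv R) fun y => y i * y j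
  simp only [hR, integral_neg] at this
  linarith

include hinv in
theorem integral_apply_mul_self_eq (i j : ι) :
    ∫ y : EuclideanSpace ℝ ι, y i * y i ∂ν = ∫ y : EuclideanSpace ℝ ι, y j * y j ∂ν := by
  classical
  let S : EuclideanSpace ℝ ι ≃ₗᵢ[ℝ] EuclideanSpace ℝ ι :=
    LinearIsometryEquiv.piLpCongrLeft 2 ℝ ℝ (Equiv.swap i j)
  have hS : ∀ y, S y i = y j := fun y => by
    simp [S, LinearIsometryEquiv.piLpCongrLeft_apply, Equiv.swap_apply_left]
  simpa [hS] using
    (integral_comp_linearIsometryEquiv_of_map_eq S (hinv S) fun y => y i * y i).symm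

variable [IsProbabilityMeasure ν]

include hs in
theorem integrable_apply_mul_apply (i j : ι) :
    Integrable (fun y : EuclideanSpace ℝ ι => y i * y j) ν :=
  Continuous.integrable_of_ae_mem_compact (isCompact_sphere 0 1)
    (ae_mem_sphere_of_measure_compl hs) (by fun_prop)

include hs in
theorem sum_integral_apply_mul_self : ∑ i, ∫ y : EuclideanSpace ℝ ι, y i * y i ∂ν = 1 := by
  rw [← integral_finsetSum _ fun i _ => integrable_apply_mul_apply hs i i]
  have : ∀ᵐ y ∂ν, ∑ i, y i * y i = (1 : ℝ) :=
    (ae_mem_sphere_of_measure_compl hs).mono fun y hy => by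
      rw [mem_sphere_zero_iff_norm] at hy
      simpa [← sq, hy] using (EuclideanSpace.real_norm_sq_eq y).symm
  simp [integral_congr_ae this]

include hs hinv in
theorem card_mul_integral_apply_mul_self (i : ι) :
    Fintype.card ι * ∫ y : EuclideanSpace ℝ ι, y i * y i ∂ν = 1 := by
  rw [← sum_integral_apply_mul_self hs,
    Finset.sum_congr rfl fun j _ => integral_apply_mul_self_eq hinv j i]
  simp

include hs hinv in
theorem card_mul_integral_inner_mul_inner (a b : EuclideanSpace ℝ ι) :
    Fintype.card ι * ∫ y, inner ℝ a y * inner ℝ b y ∂ν = inner ℝ a b := by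
  have hexp : ∀ y : EuclideanSpace ℝ ι,
      inner ℝ a y * inner ℝ b y = ∑ i, ∑ j, a i * b j * (y i * y j) := fun y => by
    simp only [PiLp.inner_apply, RCLike.inner_apply, conj_trivial, Finset.sum_mul_sum]
    exact Finset.sum_congr rfl fun i _ => Finset.sum_congr rfl fun j _ => by ring
  simp_rw [hexp]
  rw [integral_finsetSum _ fun i _ => integrable_finsetSum _ fun j _ =>
    (integrable_apply_mul_apply hs i j).const_mul _]
  simp_rw [integral_finsetSum _ fun j _ => (integrable_apply_mul_apply hs _ j).const_mul _,
    integral_const_mul]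
  rw [PiLp.inner_apply, Finset.mul_sum]
  refine Finset.sum_congr rfl fun i _ => ?_
  rw [Finset.sum_eq_single i (fun j _ hji => by rw [integral_apply_mul_apply_of_ne hinv hji.symm,
    mul_zero]) (by simp), RCLike.inner_apply, conj_trivial]
  linear_combination (a i * b i) * card_mul_integral_apply_mul_self hs hinv i

end Isotropy

section RandomDirection

variable {ι : Type*} [Fintype ι] {Ω : Type*} [MeasurableSpace Ω] {P : Measure Ω}
  {e : Ω → EuclideanSpace ℝ ι} (he : Measurable e) (hs : P.map e (Metric.sphere 0 1)ᶜ = 0)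
include he hs

theorem ae_mem_sphere_of_map : ∀ᵐ ω ∂P, e ω ∈ Metric.sphere 0 1 :=
  ae_of_ae_map he.aemeasurable (ae_mem_sphere_of_measure_compl hs)

theorem integrable_mul_comp_of_map {ξ : Ω → ℝ} (hξ : Integrable ξ P)
    {h : EuclideanSpace ℝ ι → ℝ} (hh : Continuous h) :
    Integrable (fun ω => ξ ω * h (e ω)) P := by
  obtain ⟨C, hC⟩ := (isCompact_sphere (0 : EuclideanSpace ℝ ι) 1).exists_bound_of_continuousOn
    hh.continuousOn
  exact hξ.mul_bdd (hh.measurable.comp he).aestronglyMeasurable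
    ((ae_mem_sphere_of_map he hs).mono fun ω hω => hC _ hω)

variable [IsProbabilityMeasure P]

theorem integrable_comp_of_map {f : EuclideanSpace ℝ ι → ℝ} (hf : Continuous f) :
    Integrable (fun ω => f (e ω)) P := by
  have : IsProbabilityMeasure (P.map e) := Measure.isProbabilityMeasure_map he.aemeasurable
  exact (Continuous.integrable_of_ae_mem_compact (isCompact_sphere 0 1)
    (ae_mem_sphere_of_measure_compl hs) hf).comp_measurable he

theorem card_mul_integral_inner_mul_inner_comp
    (hinv : ∀ T : EuclideanSpace ℝ ι ≃ₗᵢ[ℝ] EuclideanSpace ℝ ι, (P.map e).map T = P.map e)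
    (a b : EuclideanSpace ℝ ι) :
    Fintype.card ι * ∫ ω, inner ℝ a (e ω) * inner ℝ b (e ω) ∂P = inner ℝ a b := by
  have : IsProbabilityMeasure (P.map e) := Measure.isProbabilityMeasure_map he.aemeasurable
  rw [← card_mul_integral_inner_mul_inner hs hinv a b, integral_map he.aemeasurable
    (by fun_prop : Continuous fun y => inner ℝ a y * inner ℝ b y).aestronglyMeasurable]

theorem integral_le_of_ae_le_signal_add_noise {ξp ξm : Ω → ℝ} (hξp : MemLp ξp 2 P)
    (hξm : MemLp ξm 2 P) (hξp0 : ∫ ω, ξp ω ∂P = 0) (hξm0 : ∫ ω, ξm ω ∂P = 0)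
    (hindp : IndepFun ξp e P) (hindm : IndepFun ξm e P)
    {hp hm : EuclideanSpace ℝ ι → ℝ} (hhp : Continuous hp) (hhm : Continuous hm)
    (c α β κ K : ℝ) (a b : EuclideanSpace ℝ ι) {Y : Ω → ℝ} (hY0 : ∀ ω, 0 ≤ Y ω)
    (hY : ∀ᵐ ω ∂P, Y ω ≤ c - α * (inner ℝ a (e ω) * inner ℝ b (e ω))
      - β * (ξp ω * hp (e ω) - ξm ω * hm (e ω)) + κ * inner ℝ a (e ω) ^ 2
      + K * (ξp ω ^ 2 + ξm ω ^ 2)) :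
    ∫ ω, Y ω ∂P ≤ c - α * ∫ ω, inner ℝ a (e ω) * inner ℝ b (e ω) ∂P
      + κ * ∫ ω, inner ℝ a (e ω) ^ 2 ∂P + K * (∫ ω, ξp ω ^ 2 ∂P + ∫ ω, ξm ω ^ 2 ∂P) := by
  have hab := integrable_comp_of_map he hs
    (by fun_prop : Continuous fun y => inner ℝ a y * inner ℝ b y)
  have haa := integrable_comp_of_map he hs (by fun_prop : Continuous fun y => inner ℝ a y ^ 2)
  have hnp := integrable_mul_comp_of_map he hs (hξp.integrable one_le_two) hhp
  have hnm := integrable_mul_comp_of_map he hs (hξm.integrable one_le_two) hhm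
  have hsp := hξp.integrable_sq
  have hsm := hξm.integrable_sq
  have hnoise : ∫ ω, ξp ω * hp (e ω) - ξm ω * hm (e ω) ∂P = 0 := by
    rw [integral_sub hnp hnm,
      integral_mul_comp_eq_zero_of_indepFun hindp hξp.1 hξp0 he hhp.measurable,
      integral_mul_comp_eq_zero_of_indepFun hindm hξm.1 hξm0 he hhm.measurable, sub_zero]
  refine (integral_mono_of_nonneg (ae_of_all _ hY0) (by fun_prop) hY).trans_eq ?_
  rw [integral_add, integral_add, integral_sub, integral_sub, integral_const_mul,
    integral_const_mul, integral_const_mul, integral_const_mul, hnoise, integral_add hsp hsm]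
  · simp
  all_goals fun_prop

end RandomDirection

theorem zoGD_step_scalar_bound {γ D τ Δ V a b u w Dp Dm P M : ℝ} (hγ : 0 ≤ γ) (hD : 0 ≤ D)
    (hτ : 0 < τ) (hb : |b| ≤ V) (hP : 0 ≤ P) (hPV : P ≤ V + τ) (hM : 0 ≤ M) (hMV : M ≤ V + τ)
    (hDp : |Dp| ≤ Δ) (hDm : |Dm| ≤ Δ) :
    V ^ 2 - 2 * γ * (D * a + D / (2 * τ) * ((u + Dp) * P - (w + Dm) * M)) * b
        + γ ^ 2 * (D * a + D / (2 * τ) * ((u + Dp) * P - (w + Dm) * M)) ^ 2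
      ≤ (1 + 2 * D * γ * Δ / τ + 5 * D ^ 2 * γ ^ 2 * Δ ^ 2 / τ ^ 2) * V ^ 2
        + 2 * D * γ * Δ * V + 5 * D ^ 2 * γ ^ 2 * Δ ^ 2
        - 2 * γ * D * (a * b) - γ * D / τ * (u * (P * b) - w * (M * b))
        + 5 * γ ^ 2 * D ^ 2 * a ^ 2
        + 5 / 2 * γ ^ 2 * D ^ 2 * (V ^ 2 / τ ^ 2 + 1) * (u ^ 2 + w ^ 2) := by
  set k := D / τ with hk
  have hk0 : 0 ≤ k := by positivity
  set noise := u * P - w * M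
  set bias := Dp * P - Dm * M
  have hs : D * a + D / (2 * τ) * ((u + Dp) * P - (w + Dm) * M)
      = D * a + k / 2 * (noise + bias) := by
    rw [hk]; ring
  have hV : 0 ≤ V := (abs_nonneg b).trans hb
  have hΔ : 0 ≤ Δ := (abs_nonneg Dp).trans hDp
  have hbias : |bias| ≤ 2 * Δ * (V + τ) := by
    calc |bias| ≤ |Dp| * P + |Dm| * M := by
          simpa [bias, abs_mul, abs_of_nonneg hP, abs_of_nonneg hM] using abs_sub (Dp * P) (Dm * M)
      _ ≤ Δ * (V + τ) + Δ * (V + τ) := by gcongr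
      _ = 2 * Δ * (V + τ) := by ring
  have hbias_sq : bias ^ 2 ≤ 4 * Δ ^ 2 * (V + τ) ^ 2 := by
    have := sq_le_sq' (abs_le.mp hbias).1 (abs_le.mp hbias).2
    linarith
  have hbias_mul : -(bias * b) ≤ 2 * Δ * (V + τ) * V := by
    calc -(bias * b) ≤ |bias| * |b| := by rw [← abs_mul]; exact neg_le_abs _
      _ ≤ 2 * Δ * (V + τ) * V := by gcongr
  have hnoise_sq : noise ^ 2 ≤ 2 * (u ^ 2 + w ^ 2) * (V + τ) ^ 2 := by
    have hP2 : P ^ 2 ≤ (V + τ) ^ 2 := by gcongr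
    have hM2 : M ^ 2 ≤ (V + τ) ^ 2 := by gcongr
    nlinarith [sq_nonneg (u * P + w * M), mul_le_mul_of_nonneg_left hP2 (sq_nonneg u),
      mul_le_mul_of_nonneg_left hM2 (sq_nonneg w)]
  have hyoung : ∀ X Y : ℝ, (X + Y) ^ 2 ≤ 5 * X ^ 2 + 5 / 4 * Y ^ 2 := fun X Y => by
    nlinarith [sq_nonneg (2 * X - Y / 2)]
  have hsum_sq : ∀ X Y : ℝ, (X + Y) ^ 2 ≤ 2 * (X ^ 2 + Y ^ 2) := fun X Y => by
    nlinarith [sq_nonneg (X - Y)]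
  rw [hs]
  calc V ^ 2 - 2 * γ * (D * a + k / 2 * (noise + bias)) * b
        + γ ^ 2 * (D * a + k / 2 * (noise + bias)) ^ 2
      ≤ V ^ 2 - 2 * γ * D * (a * b) - γ * k * (noise * b) + γ * k * (2 * Δ * (V + τ) * V)
        + γ ^ 2 * (5 * (D * a) ^ 2 + 5 / 4 * (k / 2) ^ 2 * (2 * (noise ^ 2 + bias ^ 2))) := by
        linear_combination γ * k * hbias_mul + γ ^ 2 * hyoung (D * a) (k / 2 * (noise + bias))
          + γ ^ 2 * (5 / 4 * (k / 2) ^ 2) * hsum_sq noise bias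
    _ ≤ _ := by
        linear_combination (norm := skip) 5 / 8 * γ ^ 2 * k ^ 2 * (hnoise_sq + hbias_sq)
          + 5 / 8 * γ ^ 2 * k ^ 2 * (2 * (u ^ 2 + w ^ 2) + 4 * Δ ^ 2) * hsum_sq V τ
        simp only [hk, noise]
        field_simp
        linarith

theorem zoGD_step_norm_sq_le {E : Type*} [NormedAddCommGroup E] [InnerProductSpace ℝ E]
    {x xstar a e : E} (he : ‖e‖ = 1) {γ D τ Δ u w Dp Dm : ℝ} (hγ : 0 ≤ γ) (hD : 0 ≤ D)
    (hτ : 0 < τ) (hDp : |Dp| ≤ Δ) (hDm : |Dm| ≤ Δ) :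
    ‖x - γ • (D • inner ℝ a e • e + (D / (2 * τ)) •
        ((u + Dp) * ‖x + τ • e - xstar‖ - (w + Dm) * ‖x - τ • e - xstar‖) • e) - xstar‖ ^ 2
      ≤ (1 + 2 * D * γ * Δ / τ + 5 * D ^ 2 * γ ^ 2 * Δ ^ 2 / τ ^ 2) * ‖x - xstar‖ ^ 2
        + 2 * D * γ * Δ * ‖x - xstar‖ + 5 * D ^ 2 * γ ^ 2 * Δ ^ 2
        - 2 * γ * D * (inner ℝ a e * inner ℝ (x - xstar) e)
        - γ * D / τ * (u * (‖x + τ • e - xstar‖ * inner ℝ (x - xstar) e)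
          - w * (‖x - τ • e - xstar‖ * inner ℝ (x - xstar) e))
        + 5 * γ ^ 2 * D ^ 2 * inner ℝ a e ^ 2
        + 5 / 2 * γ ^ 2 * D ^ 2 * (‖x - xstar‖ ^ 2 / τ ^ 2 + 1) * (u ^ 2 + w ^ 2) := by
  have hτe : ‖τ • e‖ = τ := by rw [norm_smul, he, mul_one, Real.norm_of_nonneg hτ.le]
  have hplus : ‖x + τ • e - xstar‖ ≤ ‖x - xstar‖ + τ := by
    rw [add_sub_right_comm]; exact (norm_add_le _ _).trans_eq (by rw [hτe])
  have hminus : ‖x - τ • e - xstar‖ ≤ ‖x - xstar‖ + τ := by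
    rw [sub_right_comm]; exact (norm_sub_le _ _).trans_eq (by rw [hτe])
  have hb : |inner ℝ (x - xstar) e| ≤ ‖x - xstar‖ := by
    simpa [he] using abs_real_inner_le_norm (x - xstar) e
  have hexpand : ∀ t : ℝ, ‖x - t • e - xstar‖ ^ 2
      = ‖x - xstar‖ ^ 2 - 2 * t * inner ℝ (x - xstar) e + t ^ 2 := fun t => by
    rw [sub_right_comm, norm_sub_sq_real, real_inner_smul_right, norm_smul, he,
      Real.norm_eq_abs, mul_one, sq_abs]
    ring
  rw [smul_smul, smul_smul, ← add_smul, smul_smul, hexpand, mul_pow]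
  convert zoGD_step_scalar_bound hγ hD hτ hb (norm_nonneg _) hplus (norm_nonneg _) hminus
    hDp hDm using 1
  ring

theorem zoGD_one_step_general (d : ℕ) (hd : 1 ≤ d) (μ L : ℝ) (hμ : 0 < μ) (hμL : μ ≤ L)
    (A : Matrix (Fin d) (Fin d) ℝ) (hAsymm : A.IsSymm)
    (hAlow : ∀ v : EuclideanSpace ℝ (Fin d),
      μ * ‖v‖ ^ 2 ≤ (inner ℝ (Matrix.toEuclideanLin A v) v : ℝ))
    (hAupp : ∀ v : EuclideanSpace ℝ (Fin d),
      (inner ℝ (Matrix.toEuclideanLin A v) v : ℝ) ≤ L * ‖v‖ ^ 2)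
    (x xstar : EuclideanSpace ℝ (Fin d))
    (τ Δ σ : ℝ) (hτ : 0 < τ)
    (δ : EuclideanSpace ℝ (Fin d) → ℝ)
    (hδbound : ∀ y, |δ y| ≤ Δ)
    (Ω : Type*) [MeasurableSpace Ω] (P : Measure Ω) [IsProbabilityMeasure P]
    (e : Ω → EuclideanSpace ℝ (Fin d)) (he : Measurable e)
    (hesphere : (P.map e) (Metric.sphere (0 : EuclideanSpace ℝ (Fin d)) 1)ᶜ = 0)
    (heinv : ∀ T : EuclideanSpace ℝ (Fin d) ≃ₗᵢ[ℝ] EuclideanSpace ℝ (Fin d),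
      (P.map e).map T = P.map e)
    (ξp ξm : Ω → ℝ)
    (hξpL2 : MemLp ξp 2 P) (hξmL2 : MemLp ξm 2 P)
    (hξpmean : ∫ ω, ξp ω ∂P = 0) (hξmmean : ∫ ω, ξm ω ∂P = 0)
    (hξpvar : ∫ ω, (ξp ω) ^ 2 ∂P ≤ σ ^ 2) (hξmvar : ∫ ω, (ξm ω) ^ 2 ∂P ≤ σ ^ 2)
    (hindp : IndepFun ξp e P) (hindm : IndepFun ξm e P)
    (g : Ω → EuclideanSpace ℝ (Fin d))
    (hg : ∀ ω, g ω =
      (d : ℝ) • (inner ℝ (Matrix.toEuclideanLin A (x - xstar)) (e ω) : ℝ) • e ω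
      + ((d : ℝ) / (2 * τ)) •
        ((ξp ω + δ (x + τ • e ω)) * ‖x + τ • e ω - xstar‖
          - (ξm ω + δ (x - τ • e ω)) * ‖x - τ • e ω - xstar‖) • e ω)
    (γ : ℝ) (hγ0 : 0 < γ) (hγ : γ ≤ 1 / (5 * d * L)) :
    ∫ ω, ‖x - γ • g ω - xstar‖ ^ 2 ∂P ≤
      (1 - γ * μ + 5 * d ^ 2 * γ ^ 2 * (Δ ^ 2 + σ ^ 2) / τ ^ 2
          + 2 * d * γ * Δ / τ) * ‖x - xstar‖ ^ 2
        + 2 * d * γ * Δ * ‖x - xstar‖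
        + 5 * d ^ 2 * γ ^ 2 * (Δ ^ 2 + σ ^ 2) := by
  set v := x - xstar
  set Av := Matrix.toEuclideanLin A v
  have hpos : (Matrix.toEuclideanLin A).IsPositive := (LinearMap.isPositive_iff _).mpr
    ⟨Matrix.isSymmetric_toEuclideanLin_iff.mpr
        (by rw [Matrix.IsHermitian, Matrix.conjTranspose_eq_transpose_of_trivial]; exact hAsymm),
      fun u => (mul_nonneg hμ.le (sq_nonneg _)).trans (hAlow u)⟩
  have hbound := integral_le_of_ae_le_signal_add_noise he hesphere hξpL2 hξmL2 hξpmean hξmmean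
    hindp hindm (hp := fun y => ‖x + τ • y - xstar‖ * inner ℝ v y)
    (hm := fun y => ‖x - τ • y - xstar‖ * inner ℝ v y) (by fun_prop) (by fun_prop) _ _ _ _ _ Av v
    (Y := fun ω => ‖x - γ • g ω - xstar‖ ^ 2) (fun ω => sq_nonneg _)
    ((ae_mem_sphere_of_map he hesphere).mono fun ω hω => by
      simp only [hg]
      exact zoGD_step_norm_sq_le (mem_sphere_zero_iff_norm.mp hω) hγ0.le d.cast_nonneg hτ
        (hδbound _) (hδbound _))
  have hab := card_mul_integral_inner_mul_inner_comp he hesphere heinv Av v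
  have haa := card_mul_integral_inner_mul_inner_comp he hesphere heinv Av Av
  simp only [Fintype.card_fin, ← sq, real_inner_self_eq_norm_sq] at hab haa
  have hQ : 0 ≤ inner ℝ Av v := hpos.inner_nonneg_left v
  have hγL : γ * (5 * d * L) ≤ 1 := (le_div_iff₀ (mul_pos (mul_pos (by norm_num)
    (Nat.cast_pos.mpr hd)) (hμ.trans_le hμL))).mp hγ
  linear_combination hbound - 2 * γ * hab + 5 * γ ^ 2 * d * haa
    + 5 * γ ^ 2 * d * hpos.norm_map_sq_le hAupp v + γ * hAlow v
    + mul_le_mul_of_nonneg_right hγL (mul_nonneg hγ0.le hQ)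
    + 5 / 2 * γ ^ 2 * d ^ 2 * (‖v‖ ^ 2 / τ ^ 2 + 1) * (hξpvar + hξmvar)

/-- one-step descent estimate, Theorem 3: for the zeroth-order
gradient estimator `g` of the quadratic `½(x-x*)ᵀA(x-x*)` with `μI ⪯ A ⪯ LI`,
noises of mean zero and second moment at most `σ²`, `|δ| ≤ Δ`, and any step
size `0 < γ ≤ 1/(5dL)`,
`E‖x - γg - x*‖² ≤ (1 - γμ + 5d²γ²(Δ²+σ²)/τ² + 2dγΔ/τ)‖x-x*‖²
  + 2dγΔ‖x-x*‖ + 5d²γ²(Δ²+σ²)`. -/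
theorem zoGD_one_step (d : ℕ) (hd : 1 ≤ d) (μ L : ℝ) (hμ : 0 < μ) (hμL : μ ≤ L)
    (A : Matrix (Fin d) (Fin d) ℝ) (hAsymm : A.IsSymm)
    (hAlow : ∀ v : EuclideanSpace ℝ (Fin d),
      μ * ‖v‖ ^ 2 ≤ (inner ℝ (Matrix.toEuclideanLin A v) v : ℝ))
    (hAupp : ∀ v : EuclideanSpace ℝ (Fin d),
      (inner ℝ (Matrix.toEuclideanLin A v) v : ℝ) ≤ L * ‖v‖ ^ 2)
    (x xstar : EuclideanSpace ℝ (Fin d))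
    (τ Δ σ : ℝ) (hτ : 0 < τ) (hΔ : 0 ≤ Δ) (hσ : 0 ≤ σ)
    (δ : EuclideanSpace ℝ (Fin d) → ℝ) (hδmeas : Measurable δ)
    (hδbound : ∀ y, |δ y| ≤ Δ)
    (Ω : Type*) [MeasurableSpace Ω] (P : Measure Ω) [IsProbabilityMeasure P]
    (e : Ω → EuclideanSpace ℝ (Fin d)) (he : Measurable e)
    (hesphere : (P.map e) (Metric.sphere (0 : EuclideanSpace ℝ (Fin d)) 1)ᶜ = 0)
    (heinv : ∀ T : EuclideanSpace ℝ (Fin d) ≃ₗᵢ[ℝ] EuclideanSpace ℝ (Fin d),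
      (P.map e).map T = P.map e)
    (ξp ξm : Ω → ℝ) (hξpmeas : Measurable ξp) (hξmmeas : Measurable ξm)
    (hξpL2 : MemLp ξp 2 P) (hξmL2 : MemLp ξm 2 P)
    (hξpmean : ∫ ω, ξp ω ∂P = 0) (hξmmean : ∫ ω, ξm ω ∂P = 0)
    (hξpvar : ∫ ω, (ξp ω) ^ 2 ∂P ≤ σ ^ 2) (hξmvar : ∫ ω, (ξm ω) ^ 2 ∂P ≤ σ ^ 2)
    (hindp : IndepFun ξp e P) (hindm : IndepFun ξm e P)
    (g : Ω → EuclideanSpace ℝ (Fin d))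
    (hg : ∀ ω, g ω =
      (d : ℝ) • (inner ℝ (Matrix.toEuclideanLin A (x - xstar)) (e ω) : ℝ) • e ω
      + ((d : ℝ) / (2 * τ)) •
        ((ξp ω + δ (x + τ • e ω)) * ‖x + τ • e ω - xstar‖
          - (ξm ω + δ (x - τ • e ω)) * ‖x - τ • e ω - xstar‖) • e ω)
    (γ : ℝ) (hγ0 : 0 < γ) (hγ : γ ≤ 1 / (5 * d * L)) :
    ∫ ω, ‖x - γ • g ω - xstar‖ ^ 2 ∂P ≤
      (1 - γ * μ + 5 * d ^ 2 * γ ^ 2 * (Δ ^ 2 + σ ^ 2) / τ ^ 2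
          + 2 * d * γ * Δ / τ) * ‖x - xstar‖ ^ 2
        + 2 * d * γ * Δ * ‖x - xstar‖
        + 5 * d ^ 2 * γ ^ 2 * (Δ ^ 2 + σ ^ 2) :=
  zoGD_one_step_general d hd μ L hμ hμL A hAsymm hAlow hAupp x xstar τ Δ σ hτ δ hδbound Ω P e he
    hesphere heinv ξp ξm hξpL2 hξmL2 hξpmean hξmmean hξpvar hξmvar hindp hindm g hg γ hγ0 hγ
end

section
/- Let d ≥ 1, 0 < μ ≤ L, and let A be a real symmetric d×d matrix with μ‖v‖² ≤ vᵀAv ≤ L‖v‖² for all v ∈ ℝ^d. Let x, x* ∈ ℝ^d, τ > 0, σ ≥ 0. Let e be uniformly distributed on the unit Euclidean sphere S^{d−1}, and ξ⁺, ξ⁻ real random variables independent of e with E[ξ⁺] = E[ξ⁻] = 0, E[(ξ⁺)²] ≤ σ², E[(ξ⁻)²] ≤ σ². Define g = d·⟨A(x−x*), e⟩·e + (d/(2τ))·(ξ⁺·‖x+τe−x*‖ − ξ⁻·‖x−τe−x*‖)·e. Then for every 0 < γ ≤ 1/(5dL), E[‖x − γg − x*‖²] ≤ (1 − γμ + 5d²γ²σ²/τ²)·‖x−x*‖²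 + 5d²γ²σ². -/
/-!
Write `y = x - x*`, so that `g = c • e` for a random scalar `c`, and
`‖x - γ g - x*‖² = ‖y‖² - 2γ⟪g, y⟫ + γ²‖g‖²`. Invariance of the law of `e` under reflections
makes `E[⟪p, e⟫²]` depend only on `‖p‖`; summing over an orthonormal basis and polarizing gives
`E[⟪u, e⟫⟪v, e⟫] = ⟪u, v⟫ / d`. Together with the independence of the zero-mean noises from `e`
this makes `g` unbiased along `y`: `E⟪g, y⟫ = ⟪A y, y⟫ ≥ μ‖y‖²`. For the second moment,
`(a + b)² ≤ 2a² + 2b²` and the parallelogram law `‖y + τe‖² + ‖y - τe‖² = 2(‖y‖² + τ²)` give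
`E‖g‖² ≤ 2d‖A y‖² + 4d²σ²(‖y‖² + τ²)/τ²`, and since `‖A y‖² ≤ L⟪A y, y⟫` the condition
`γdL ≤ 1/5` lets the descent term `-2γ⟪A y, y⟫` absorb the first summand.
-/

open MeasureTheory ProbabilityTheory

open Module
open scoped RealInnerProductSpace

theorem ProbabilityTheory.IndepFun.integral_mul_comp_eq_zero {Ω β : Type*} [MeasurableSpace Ω]
    [MeasurableSpace β] {P : Measure Ω} {ξ : Ω → ℝ} {e : Ω → β} (hind : IndepFun ξ e P)
    (hξ : AEStronglyMeasurable ξ P) (hmean : ∫ ω, ξ ω ∂P = 0) (he : AEMeasurable e P)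
    {f : β → ℝ} (hf : Measurable f) : ∫ ω, ξ ω * f (e ω) ∂P = 0 := by
  simpa [hmean] using (hind.comp measurable_id hf).integral_fun_mul_eq_mul_integral hξ
    (hf.comp_aemeasurable he).aestronglyMeasurable

section InnerProductSpace

variable {E : Type*} [NormedAddCommGroup E] [InnerProductSpace ℝ E]

theorem LinearMap.IsPositive.norm_apply_sq_le {T : E →ₗ[ℝ] E} (hT : T.IsPositive) {L : ℝ}
    (hL : 0 < L) (hle : ∀ v, ⟪T v, v⟫ ≤ L * ‖v‖ ^ 2) (y : E) :
    ‖T y‖ ^ 2 ≤ L * ⟪T y, y⟫ := by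
  -- the quadratic form is nonnegative at `y - L⁻¹ • T y`
  have h := hT.inner_nonneg_left (y - L⁻¹ • T y)
  have hsymm : ⟪T (T y), y⟫ = ‖T y‖ ^ 2 := by
    rw [hT.isSymmetric, real_inner_self_eq_norm_sq]
  simp only [map_sub, map_smul, inner_sub_left, inner_sub_right, real_inner_smul_left,
    real_inner_smul_right, hsymm, real_inner_self_eq_norm_sq] at h
  have hTT : L⁻¹ ^ 2 * ⟪T (T y), T y⟫ ≤ L⁻¹ * ‖T y‖ ^ 2 :=
    calc L⁻¹ ^ 2 * ⟪T (T y), T y⟫ ≤ L⁻¹ ^ 2 * (L * ‖T y‖ ^ 2) := by gcongr; exact hle _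
      _ = L⁻¹ * ‖T y‖ ^ 2 := by field_simp
  have : L⁻¹ * ‖T y‖ ^ 2 ≤ ⟪T y, y⟫ := by linarith
  calc ‖T y‖ ^ 2 = L * (L⁻¹ * ‖T y‖ ^ 2) := by field_simp
    _ ≤ L * ⟪T y, y⟫ := by gcongr

theorem integral_norm_sub_smul_sq {Ω : Type*} [MeasurableSpace Ω] {P : Measure Ω}
    [IsProbabilityMeasure P] {G : Ω → E} (hG : MemLp G 2 P) (y : E) (γ : ℝ) :
    ∫ ω, ‖y - γ • G ω‖ ^ 2 ∂P = ‖y‖ ^ 2 - 2 * γ * ∫ ω, ⟪G ω, y⟫ ∂P + γ ^ 2 * ∫ ω, ‖G ω‖ ^ 2 ∂P := by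
  have hexpand (ω) : ‖y - γ • G ω‖ ^ 2 = ‖y‖ ^ 2 - 2 * γ * ⟪G ω, y⟫ + γ ^ 2 * ‖G ω‖ ^ 2 := by
    rw [norm_sub_sq_real, real_inner_smul_right, norm_smul, mul_pow, Real.norm_eq_abs, sq_abs,
      real_inner_comm]
    ring
  have hinner : Integrable (fun ω => ⟪G ω, y⟫) P := (hG.integrable one_le_two).inner_const y
  have hnorm : Integrable (fun ω => ‖G ω‖ ^ 2) P := hG.integrable_norm_pow two_ne_zero
  simp_rw [hexpand]
  rw [integral_add _ (hnorm.const_mul _), integral_sub (integrable_const _) (hinner.const_mul _),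
    integral_const_mul, integral_const_mul, integral_const, probReal_univ, one_smul]
  exact (integrable_const _).sub (hinner.const_mul _)

/-- The two-point estimator `(d / 2τ) (f(x + τw, ζp) - f(x - τw, ζm)) w` for the noisy quadratic
oracle `f(z, ζ) = ½⟪A(z - x*), z - x*⟫ + ζ ‖z - x*‖`, written with `y = x - x*` and `v = A y`. -/
noncomputable def zoGradEst (v y : E) (τ : ℝ) (w : E) (ζp ζm : ℝ) : E :=
  (finrank ℝ E : ℝ) • ⟪v, w⟫ • w
    + ((finrank ℝ E : ℝ) / (2 * τ)) • (ζp * ‖y + τ • w‖ - ζm * ‖y - τ • w‖) • w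

theorem inner_zoGradEst (v y : E) (τ : ℝ) (w : E) (ζp ζm : ℝ) :
    ⟪zoGradEst v y τ w ζp ζm, y⟫ = finrank ℝ E * (⟪v, w⟫ * ⟪y, w⟫)
      + finrank ℝ E / (2 * τ) * (ζp * (‖y + τ • w‖ * ⟪y, w⟫) - ζm * (‖y - τ • w‖ * ⟪y, w⟫)) := by
  simp only [zoGradEst, inner_add_left, real_inner_smul_left, real_inner_comm y w]
  ring

theorem norm_zoGradEst_sq_le (v y : E) (τ : ℝ) {w : E} (hw : ‖w‖ = 1) (ζp ζm : ℝ) :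
    ‖zoGradEst v y τ w ζp ζm‖ ^ 2 ≤ 2 * finrank ℝ E ^ 2 * ⟪v, w⟫ ^ 2
      + 2 * finrank ℝ E ^ 2 * (‖y‖ ^ 2 + τ ^ 2) / τ ^ 2 * (ζp ^ 2 + ζm ^ 2) := by
  set n : ℝ := (finrank ℝ E : ℝ)
  set a := ‖y + τ • w‖
  set b := ‖y - τ • w‖
  have hpar : a ^ 2 + b ^ 2 = 2 * (‖y‖ ^ 2 + τ ^ 2) := by
    rw [parallelogram_law_with_norm ℝ, norm_smul, hw, mul_one, Real.norm_eq_abs, sq_abs]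
  have hnoise : (ζp * a - ζm * b) ^ 2 ≤ 4 * (‖y‖ ^ 2 + τ ^ 2) * (ζp ^ 2 + ζm ^ 2) := by
    nlinarith [sq_nonneg (ζp * a + ζm * b), mul_nonneg (sq_nonneg ζp) (sq_nonneg b),
      mul_nonneg (sq_nonneg ζm) (sq_nonneg a)]
  rw [zoGradEst, smul_smul, smul_smul, ← add_smul, norm_smul, hw, mul_one, Real.norm_eq_abs,
    sq_abs]
  calc (n * ⟪v, w⟫ + n / (2 * τ) * (ζp * a - ζm * b)) ^ 2
      ≤ 2 * (n * ⟪v, w⟫) ^ 2 + 2 * (n / (2 * τ)) ^ 2 * (ζp * a - ζm * b) ^ 2 := by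
        nlinarith [sq_nonneg (n * ⟪v, w⟫ - n / (2 * τ) * (ζp * a - ζm * b))]
    _ ≤ 2 * (n * ⟪v, w⟫) ^ 2
          + 2 * (n / (2 * τ)) ^ 2 * (4 * (‖y‖ ^ 2 + τ ^ 2) * (ζp ^ 2 + ζm ^ 2)) := by
        gcongr
    _ = _ := by ring

theorem exists_ae_norm_comp_le_of_ae_norm_eq_one [FiniteDimensional ℝ E] {Ω F : Type*}
    [MeasurableSpace Ω] [SeminormedAddGroup F] {P : Measure Ω} {e : Ω → E}
    (he : ∀ᵐ ω ∂P, ‖e ω‖ = 1) {f : E → F} (hf : Continuous f) :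
    ∃ C, ∀ᵐ ω ∂P, ‖f (e ω)‖ ≤ C := by
  obtain ⟨C, hC⟩ := (isCompact_sphere (0 : E) 1).exists_bound_of_continuousOn hf.continuousOn
  exact ⟨C, he.mono fun ω hω => hC _ (mem_sphere_zero_iff_norm.2 hω)⟩

variable [MeasurableSpace E]

/-- Invariance under every linear isometry characterises the uniform distribution on the unit
sphere among probability measures carried by it. -/
structure IsUniformOnSphere (ν : Measure E) : Prop where
  ae_norm_eq_one : ∀ᵐ w ∂ν, ‖w‖ = 1
  map_linearIsometryEquiv : ∀ T : E ≃ₗᵢ[ℝ] E, ν.map T = ν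

theorem IsUniformOnSphere.finrank_pos [FiniteDimensional ℝ E] {ν : Measure E} [NeZero ν]
    (hν : IsUniformOnSphere ν) : 0 < finrank ℝ E := by
  obtain ⟨w, hw⟩ := hν.ae_norm_eq_one.exists
  have : Nontrivial E := ⟨w, 0, by rintro rfl; simp at hw⟩
  exact Module.finrank_pos

variable [BorelSpace E]

theorem IsUniformOnSphere.integral_inner_sq_eq_of_norm_eq {ν : Measure E}
    (hν : IsUniformOnSphere ν) {p q : E} (hpq : ‖p‖ = ‖q‖) :
    ∫ w, ⟪p, w⟫ ^ 2 ∂ν = ∫ w, ⟪q, w⟫ ^ 2 ∂ν := by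
  set T := (ℝ ∙ (p - q))ᗮ.reflection
  calc ∫ w, ⟪p, w⟫ ^ 2 ∂ν = ∫ w, ⟪T p, T w⟫ ^ 2 ∂ν := by
        simp_rw [LinearIsometryEquiv.inner_map_map]
    _ = ∫ w, ⟪q, w⟫ ^ 2 ∂(ν.map T) := by
        rw [Submodule.reflection_sub hpq, integral_map T.continuous.aemeasurable
          ((continuous_const.inner continuous_id).pow 2).aestronglyMeasurable]
    _ = ∫ w, ⟪q, w⟫ ^ 2 ∂ν := by rw [hν.map_linearIsometryEquiv]

variable [FiniteDimensional ℝ E]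

section ComposedWithUnitVector

variable {Ω : Type*} [MeasurableSpace Ω] {P : Measure Ω} {e : Ω → E}

theorem integrable_comp_of_ae_norm_eq_one [IsFiniteMeasure P] {F : Type*} [NormedAddCommGroup F]
    (he : AEMeasurable e P) (he1 : ∀ᵐ ω ∂P, ‖e ω‖ = 1) {f : E → F} (hf : Continuous f) :
    Integrable (fun ω => f (e ω)) P :=
  let ⟨C, hC⟩ := exists_ae_norm_comp_le_of_ae_norm_eq_one he1 hf
  .of_bound (hf.comp_aestronglyMeasurable he.aestronglyMeasurable) C hC

theorem MeasureTheory.Integrable.mul_comp_of_ae_norm_eq_one {ξ : Ω → ℝ} (hξ : Integrable ξ P)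
    (he : AEMeasurable e P) (he1 : ∀ᵐ ω ∂P, ‖e ω‖ = 1) {f : E → ℝ} (hf : Continuous f) :
    Integrable (fun ω => ξ ω * f (e ω)) P :=
  let ⟨_, hC⟩ := exists_ae_norm_comp_le_of_ae_norm_eq_one he1 hf
  hξ.mul_bdd (hf.comp_aestronglyMeasurable he.aestronglyMeasurable) hC

end ComposedWithUnitVector

namespace IsUniformOnSphere

variable {ν : Measure E} [IsProbabilityMeasure ν]

theorem integrable {F : Type*} [NormedAddCommGroup F] (hν : IsUniformOnSphere ν) {f : E → F}
    (hf : Continuous f) : Integrable f ν :=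
  integrable_comp_of_ae_norm_eq_one aemeasurable_id hν.ae_norm_eq_one hf

theorem integral_inner_sq (hν : IsUniformOnSphere ν) (p : E) :
    ∫ w, ⟪p, w⟫ ^ 2 ∂ν = ‖p‖ ^ 2 / finrank ℝ E := by
  let b := stdOrthonormalBasis ℝ E
  have hbasis (i) : ∫ w, ⟪p, w⟫ ^ 2 ∂ν = ‖p‖ ^ 2 * ∫ w, ⟪b i, w⟫ ^ 2 ∂ν := by
    rw [hν.integral_inner_sq_eq_of_norm_eq (q := ‖p‖ • b i) (by simp [norm_smul])]
    simp_rw [real_inner_smul_left, mul_pow, integral_const_mul]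
  have hsum : ∑ i, ∫ w, ⟪b i, w⟫ ^ 2 ∂ν = 1 := by
    rw [← integral_finsetSum _ fun i _ =>
      hν.integrable ((continuous_const.inner continuous_id).pow 2)]
    simp_rw [b.sum_sq_inner_right]
    rw [integral_congr_ae (g := fun _ => 1) (hν.ae_norm_eq_one.mono fun w hw => by simp [hw])]
    simp
  rw [eq_div_iff (by exact_mod_cast hν.finrank_pos.ne')]
  calc (∫ w, ⟪p, w⟫ ^ 2 ∂ν) * finrank ℝ E = ∑ i, ‖p‖ ^ 2 * ∫ w, ⟪b i, w⟫ ^ 2 ∂ν := by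
        simp [← hbasis, mul_comm]
    _ = ‖p‖ ^ 2 := by rw [← Finset.mul_sum, hsum, mul_one]

theorem integral_inner_mul_inner (hν : IsUniformOnSphere ν) (u v : E) :
    ∫ w, ⟪u, w⟫ * ⟪v, w⟫ ∂ν = ⟪u, v⟫ / finrank ℝ E := by
  have hpolar (w : E) : ⟪u, w⟫ * ⟪v, w⟫ = (⟪u + v, w⟫ ^ 2 - ⟪u - v, w⟫ ^ 2) / 4 := by
    rw [inner_add_left, inner_sub_left]; ring
  have hint (q : E) : Integrable (fun w => ⟪q, w⟫ ^ 2) ν :=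
    hν.integrable ((continuous_const.inner continuous_id).pow 2)
  simp_rw [hpolar, integral_div, integral_sub (hint _) (hint _), hν.integral_inner_sq,
    norm_add_sq_real, norm_sub_sq_real]
  ring

end IsUniformOnSphere

section OneStep

variable {Ω : Type*} [MeasurableSpace Ω] {P : Measure Ω} [IsProbabilityMeasure P] {e : Ω → E}
  {ξp ξm : Ω → ℝ}

theorem memLp_zoGradEst (he : AEMeasurable e P) (he1 : ∀ᵐ ω ∂P, ‖e ω‖ = 1)
    (hξp : MemLp ξp 2 P) (hξm : MemLp ξm 2 P) (v y : E) (τ : ℝ) :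
    MemLp (fun ω => zoGradEst v y τ (e ω) (ξp ω) (ξm ω)) 2 P := by
  have hmeas : AEStronglyMeasurable (fun ω => zoGradEst v y τ (e ω) (ξp ω) (ξm ω)) P := by
    have := he.aestronglyMeasurable
    have := hξp.aestronglyMeasurable
    have := hξm.aestronglyMeasurable
    unfold zoGradEst
    fun_prop
  have hdom : Integrable (fun ω => 2 * (finrank ℝ E : ℝ) ^ 2 * ⟪v, e ω⟫ ^ 2
      + 2 * finrank ℝ E ^ 2 * (‖y‖ ^ 2 + τ ^ 2) / τ ^ 2 * (ξp ω ^ 2 + ξm ω ^ 2)) P :=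
    ((integrable_comp_of_ae_norm_eq_one (f := fun w => ⟪v, w⟫ ^ 2) he he1
      (by fun_prop)).const_mul _).add
      ((hξp.integrable_sq.add hξm.integrable_sq).const_mul _)
  refine (memLp_two_iff_integrable_sq_norm hmeas).2 (hdom.mono' (hmeas.norm.pow 2) ?_)
  filter_upwards [he1] with ω hω
  rw [Real.norm_of_nonneg (by positivity)]
  exact norm_zoGradEst_sq_le v y τ hω _ _

theorem integral_inner_zoGradEst (he : AEMeasurable e P) (hν : IsUniformOnSphere (P.map e))
    (hξp : Integrable ξp P) (hξm : Integrable ξm P) (hindp : IndepFun ξp e P)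
    (hindm : IndepFun ξm e P) (hmeanp : ∫ ω, ξp ω ∂P = 0) (hmeanm : ∫ ω, ξm ω ∂P = 0)
    (v y : E) (τ : ℝ) :
    ∫ ω, ⟪zoGradEst v y τ (e ω) (ξp ω) (ξm ω), y⟫ ∂P = ⟪v, y⟫ := by
  have := Measure.isProbabilityMeasure_map (μ := P) he
  have he1 := ae_of_ae_map he hν.ae_norm_eq_one
  have hn : (finrank ℝ E : ℝ) ≠ 0 := by exact_mod_cast hν.finrank_pos.ne'
  have hcont : Continuous fun w : E => ⟪v, w⟫ * ⟪y, w⟫ := by fun_prop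
  have hp : Continuous fun w : E => ‖y + τ • w‖ * ⟪y, w⟫ := by fun_prop
  have hm : Continuous fun w : E => ‖y - τ • w‖ * ⟪y, w⟫ := by fun_prop
  have hsignal : ∫ ω, ⟪v, e ω⟫ * ⟪y, e ω⟫ ∂P = ⟪v, y⟫ / finrank ℝ E := by
    rw [← hν.integral_inner_mul_inner, integral_map he hcont.aestronglyMeasurable]
  have hsignal_int : Integrable (fun ω => ⟪v, e ω⟫ * ⟪y, e ω⟫) P :=
    integrable_comp_of_ae_norm_eq_one he he1 hcont
  have hp_int : Integrable (fun ω => ξp ω * (‖y + τ • e ω‖ * ⟪y, e ω⟫)) P :=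
    hξp.mul_comp_of_ae_norm_eq_one he he1 hp
  have hm_int : Integrable (fun ω => ξm ω * (‖y - τ • e ω‖ * ⟪y, e ω⟫)) P :=
    hξm.mul_comp_of_ae_norm_eq_one he he1 hm
  have hnoise_int : Integrable (fun ω => ξp ω * (‖y + τ • e ω‖ * ⟪y, e ω⟫)
      - ξm ω * (‖y - τ • e ω‖ * ⟪y, e ω⟫)) P := hp_int.sub hm_int
  simp_rw [inner_zoGradEst]
  rw [integral_add (hsignal_int.const_mul _) (hnoise_int.const_mul _),
    integral_const_mul, integral_const_mul, integral_sub hp_int hm_int, hsignal,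
    hindp.integral_mul_comp_eq_zero hξp.1 hmeanp he hp.measurable,
    hindm.integral_mul_comp_eq_zero hξm.1 hmeanm he hm.measurable]
  field_simp
  ring

theorem integral_norm_zoGradEst_sq_le (he : AEMeasurable e P)
    (hν : IsUniformOnSphere (P.map e)) (hξp : MemLp ξp 2 P) (hξm : MemLp ξm 2 P) {σ : ℝ}
    (hvarp : ∫ ω, ξp ω ^ 2 ∂P ≤ σ ^ 2) (hvarm : ∫ ω, ξm ω ^ 2 ∂P ≤ σ ^ 2) (v y : E) (τ : ℝ) :
    ∫ ω, ‖zoGradEst v y τ (e ω) (ξp ω) (ξm ω)‖ ^ 2 ∂P ≤ 2 * finrank ℝ E * ‖v‖ ^ 2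
      + 4 * finrank ℝ E ^ 2 * σ ^ 2 * (‖y‖ ^ 2 + τ ^ 2) / τ ^ 2 := by
  have := Measure.isProbabilityMeasure_map (μ := P) he
  have he1 := ae_of_ae_map he hν.ae_norm_eq_one
  have hn : (finrank ℝ E : ℝ) ≠ 0 := by exact_mod_cast hν.finrank_pos.ne'
  set C : ℝ := 2 * finrank ℝ E ^ 2 * (‖y‖ ^ 2 + τ ^ 2) / τ ^ 2
  have hcont : Continuous fun w : E => ⟪v, w⟫ ^ 2 := by fun_prop
  have hsignal : ∫ ω, ⟪v, e ω⟫ ^ 2 ∂P = ‖v‖ ^ 2 / finrank ℝ E := by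
    rw [← hν.integral_inner_sq, integral_map he hcont.aestronglyMeasurable]
  have hint1 : Integrable (fun ω => 2 * (finrank ℝ E : ℝ) ^ 2 * ⟪v, e ω⟫ ^ 2) P :=
    (integrable_comp_of_ae_norm_eq_one he he1 hcont).const_mul _
  have hint2 : Integrable (fun ω => C * (ξp ω ^ 2 + ξm ω ^ 2)) P :=
    (hξp.integrable_sq.add hξm.integrable_sq).const_mul C
  calc ∫ ω, ‖zoGradEst v y τ (e ω) (ξp ω) (ξm ω)‖ ^ 2 ∂P
      ≤ ∫ ω, 2 * (finrank ℝ E : ℝ) ^ 2 * ⟪v, e ω⟫ ^ 2 + C * (ξp ω ^ 2 + ξm ω ^ 2) ∂P :=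
        integral_mono_of_nonneg (.of_forall fun _ => by positivity) (hint1.add hint2)
          (he1.mono fun ω hω => norm_zoGradEst_sq_le v y τ hω _ _)
    _ = 2 * finrank ℝ E ^ 2 * (‖v‖ ^ 2 / finrank ℝ E)
          + C * (∫ ω, ξp ω ^ 2 ∂P + ∫ ω, ξm ω ^ 2 ∂P) := by
        rw [integral_add hint1 hint2, integral_const_mul, integral_const_mul,
          integral_add hξp.integrable_sq hξm.integrable_sq, hsignal]
    _ ≤ 2 * finrank ℝ E ^ 2 * (‖v‖ ^ 2 / finrank ℝ E) + C * (σ ^ 2 + σ ^ 2) := by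
        gcongr
    _ = _ := by
        field_simp
        ring

theorem integral_norm_sub_smul_zoGradEst_sq_le (he : AEMeasurable e P)
    (hν : IsUniformOnSphere (P.map e)) (hξp : MemLp ξp 2 P) (hξm : MemLp ξm 2 P)
    (hindp : IndepFun ξp e P) (hindm : IndepFun ξm e P) (hmeanp : ∫ ω, ξp ω ∂P = 0)
    (hmeanm : ∫ ω, ξm ω ∂P = 0) {σ : ℝ} (hvarp : ∫ ω, ξp ω ^ 2 ∂P ≤ σ ^ 2)
    (hvarm : ∫ ω, ξm ω ^ 2 ∂P ≤ σ ^ 2) {μ L τ γ : ℝ} {v y : E} (hτ : τ ≠ 0) (hγ : 0 ≤ γ)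
    (hγL : γ * (finrank ℝ E * L) ≤ 1 / 5) (hμ : 0 ≤ μ) (hvy : μ * ‖y‖ ^ 2 ≤ ⟪v, y⟫)
    (hv : ‖v‖ ^ 2 ≤ L * ⟪v, y⟫) :
    ∫ ω, ‖y - γ • zoGradEst v y τ (e ω) (ξp ω) (ξm ω)‖ ^ 2 ∂P ≤
      (1 - γ * μ + 5 * finrank ℝ E ^ 2 * γ ^ 2 * σ ^ 2 / τ ^ 2) * ‖y‖ ^ 2
        + 5 * finrank ℝ E ^ 2 * γ ^ 2 * σ ^ 2 := by
  set n : ℝ := (finrank ℝ E : ℝ)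
  have he1 := ae_of_ae_map he hν.ae_norm_eq_one
  rw [integral_norm_sub_smul_sq (memLp_zoGradEst he he1 hξp hξm v y τ),
    integral_inner_zoGradEst he hν (hξp.integrable one_le_two) (hξm.integrable one_le_two)
      hindp hindm hmeanp hmeanm v y τ]
  have hdescent : γ * (μ * ‖y‖ ^ 2) ≤ γ * ⟪v, y⟫ := by gcongr
  have hdescent0 : 0 ≤ γ * ⟪v, y⟫ := hdescent.trans' (by positivity)
  have hdrift : γ ^ 2 * (2 * n * ‖v‖ ^ 2) ≤ 2 / 5 * (γ * ⟪v, y⟫) :=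
    calc γ ^ 2 * (2 * n * ‖v‖ ^ 2) ≤ γ ^ 2 * (2 * n * (L * ⟪v, y⟫)) := by gcongr
      _ = 2 * (γ * (n * L)) * (γ * ⟪v, y⟫) := by ring
      _ ≤ 2 * (1 / 5) * (γ * ⟪v, y⟫) := by gcongr
      _ = 2 / 5 * (γ * ⟪v, y⟫) := by ring
  have hnoise : 4 * n ^ 2 * σ ^ 2 * (‖y‖ ^ 2 + τ ^ 2) / τ ^ 2
      = 4 * n ^ 2 * σ ^ 2 / τ ^ 2 * ‖y‖ ^ 2 + 4 * n ^ 2 * σ ^ 2 := by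
    field_simp
  have hnoise₁ : 0 ≤ n ^ 2 * γ ^ 2 * σ ^ 2 / τ ^ 2 * ‖y‖ ^ 2 := by positivity
  have hnoise₂ : 0 ≤ n ^ 2 * γ ^ 2 * σ ^ 2 := by positivity
  calc _ ≤ ‖y‖ ^ 2 - 2 * γ * ⟪v, y⟫
        + γ ^ 2 * (2 * n * ‖v‖ ^ 2 + 4 * n ^ 2 * σ ^ 2 * (‖y‖ ^ 2 + τ ^ 2) / τ ^ 2) := by
        gcongr
        exact integral_norm_zoGradEst_sq_le he hν hξp hξm hvarp hvarm v y τ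
    _ ≤ _ := by
        rw [hnoise]
        linear_combination hdescent + hdrift + 3 / 5 * hdescent0 + hnoise₁ + hnoise₂

end OneStep

end InnerProductSpace

theorem zoGD_one_step_no_deterministic_noise_general (d : ℕ) (hd : 1 ≤ d)
    (μ L : ℝ) (hμ : 0 < μ) (hμL : μ ≤ L)
    (A : Matrix (Fin d) (Fin d) ℝ) (hAsymm : A.IsSymm)
    (hAlow : ∀ v : EuclideanSpace ℝ (Fin d),
      μ * ‖v‖ ^ 2 ≤ (inner ℝ (Matrix.toEuclideanLin A v) v : ℝ))
    (hAupp : ∀ v : EuclideanSpace ℝ (Fin d),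
      (inner ℝ (Matrix.toEuclideanLin A v) v : ℝ) ≤ L * ‖v‖ ^ 2)
    (x xstar : EuclideanSpace ℝ (Fin d))
    (τ σ : ℝ) (hτ : 0 < τ)
    (Ω : Type*) [MeasurableSpace Ω] (P : Measure Ω) [IsProbabilityMeasure P]
    (e : Ω → EuclideanSpace ℝ (Fin d)) (he : Measurable e)
    (hesphere : (P.map e) (Metric.sphere (0 : EuclideanSpace ℝ (Fin d)) 1)ᶜ = 0)
    (heinv : ∀ T : EuclideanSpace ℝ (Fin d) ≃ₗᵢ[ℝ] EuclideanSpace ℝ (Fin d),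
      (P.map e).map T = P.map e)
    (ξp ξm : Ω → ℝ)
    (hξpL2 : MemLp ξp 2 P) (hξmL2 : MemLp ξm 2 P)
    (hξpmean : ∫ ω, ξp ω ∂P = 0) (hξmmean : ∫ ω, ξm ω ∂P = 0)
    (hξpvar : ∫ ω, (ξp ω) ^ 2 ∂P ≤ σ ^ 2) (hξmvar : ∫ ω, (ξm ω) ^ 2 ∂P ≤ σ ^ 2)
    (hindp : IndepFun ξp e P) (hindm : IndepFun ξm e P)
    (g : Ω → EuclideanSpace ℝ (Fin d))
    (hg : ∀ ω, g ω =
      (d : ℝ) • (inner ℝ (Matrix.toEuclideanLin A (x - xstar)) (e ω) : ℝ) • e ω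
      + ((d : ℝ) / (2 * τ)) •
        (ξp ω * ‖x + τ • e ω - xstar‖ - ξm ω * ‖x - τ • e ω - xstar‖) • e ω)
    (γ : ℝ) (hγ0 : 0 < γ) (hγ : γ ≤ 1 / (5 * d * L)) :
    ∫ ω, ‖x - γ • g ω - xstar‖ ^ 2 ∂P ≤
      (1 - γ * μ + 5 * d ^ 2 * γ ^ 2 * σ ^ 2 / τ ^ 2) * ‖x - xstar‖ ^ 2
        + 5 * d ^ 2 * γ ^ 2 * σ ^ 2 := by
  set M := Matrix.toEuclideanLin A
  set y := x - xstar
  have hM : M.IsPositive := M.isPositive_iff.2 ⟨Matrix.isSymmetric_toEuclideanLin_iff.2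
    (Matrix.isHermitian_iff_isSymm.2 hAsymm), fun v => by nlinarith [hAlow v, sq_nonneg ‖v‖]⟩
  have hν : IsUniformOnSphere (P.map e) :=
    ⟨Filter.Eventually.mono (mem_ae_iff.2 hesphere) fun w => mem_sphere_zero_iff_norm.1, heinv⟩
  have hg' (ω) : x - γ • g ω - xstar = y - γ • zoGradEst (M y) y τ (e ω) (ξp ω) (ξm ω) := by
    rw [sub_right_comm, hg]
    simp only [zoGradEst, finrank_euclideanSpace_fin, y, add_sub_right_comm x, sub_right_comm x]
  have hL : 0 < L := hμ.trans_le hμL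
  have hd' : (0 : ℝ) < d := by exact_mod_cast hd
  have hγL : γ * (finrank ℝ (EuclideanSpace ℝ (Fin d)) * L) ≤ 1 / 5 := by
    rw [le_div_iff₀ (by positivity)] at hγ
    rw [finrank_euclideanSpace_fin]
    linarith
  simp_rw [hg']
  simpa [finrank_euclideanSpace_fin] using integral_norm_sub_smul_zoGradEst_sq_le he.aemeasurable
    hν hξpL2 hξmL2 hindp hindm hξpmean hξmmean hξpvar hξmvar hτ.ne' hγ0.le hγL hμ.le (hAlow y)
    (hM.norm_apply_sq_le hL hAupp y)

/-- one-step descent estimate, Theorem 3 with `Δ = 0`: for the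
zeroth-order gradient estimator `g` of the quadratic `½(x-x*)ᵀA(x-x*)` with
`μI ⪯ A ⪯ LI`, zero-mean noises with second moment at most `σ²`, and any step
size `0 < γ ≤ 1/(5dL)`,
`E‖x - γg - x*‖² ≤ (1 - γμ + 5d²γ²σ²/τ²)‖x-x*‖² + 5d²γ²σ²`. -/
theorem zoGD_one_step_no_deterministic_noise (d : ℕ) (hd : 1 ≤ d)
    (μ L : ℝ) (hμ : 0 < μ) (hμL : μ ≤ L)
    (A : Matrix (Fin d) (Fin d) ℝ) (hAsymm : A.IsSymm)
    (hAlow : ∀ v : EuclideanSpace ℝ (Fin d),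
      μ * ‖v‖ ^ 2 ≤ (inner ℝ (Matrix.toEuclideanLin A v) v : ℝ))
    (hAupp : ∀ v : EuclideanSpace ℝ (Fin d),
      (inner ℝ (Matrix.toEuclideanLin A v) v : ℝ) ≤ L * ‖v‖ ^ 2)
    (x xstar : EuclideanSpace ℝ (Fin d))
    (τ σ : ℝ) (hτ : 0 < τ) (hσ : 0 ≤ σ)
    (Ω : Type*) [MeasurableSpace Ω] (P : Measure Ω) [IsProbabilityMeasure P]
    (e : Ω → EuclideanSpace ℝ (Fin d)) (he : Measurable e)
    (hesphere : (P.map e) (Metric.sphere (0 : EuclideanSpace ℝ (Fin d)) 1)ᶜ = 0)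
    (heinv : ∀ T : EuclideanSpace ℝ (Fin d) ≃ₗᵢ[ℝ] EuclideanSpace ℝ (Fin d),
      (P.map e).map T = P.map e)
    (ξp ξm : Ω → ℝ) (hξpmeas : Measurable ξp) (hξmmeas : Measurable ξm)
    (hξpL2 : MemLp ξp 2 P) (hξmL2 : MemLp ξm 2 P)
    (hξpmean : ∫ ω, ξp ω ∂P = 0) (hξmmean : ∫ ω, ξm ω ∂P = 0)
    (hξpvar : ∫ ω, (ξp ω) ^ 2 ∂P ≤ σ ^ 2) (hξmvar : ∫ ω, (ξm ω) ^ 2 ∂P ≤ σ ^ 2)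
    (hindp : IndepFun ξp e P) (hindm : IndepFun ξm e P)
    (g : Ω → EuclideanSpace ℝ (Fin d))
    (hg : ∀ ω, g ω =
      (d : ℝ) • (inner ℝ (Matrix.toEuclideanLin A (x - xstar)) (e ω) : ℝ) • e ω
      + ((d : ℝ) / (2 * τ)) •
        (ξp ω * ‖x + τ • e ω - xstar‖ - ξm ω * ‖x - τ • e ω - xstar‖) • e ω)
    (γ : ℝ) (hγ0 : 0 < γ) (hγ : γ ≤ 1 / (5 * d * L)) :
    ∫ ω, ‖x - γ • g ω - xstar‖ ^ 2 ∂P ≤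
      (1 - γ * μ + 5 * d ^ 2 * γ ^ 2 * σ ^ 2 / τ ^ 2) * ‖x - xstar‖ ^ 2
        + 5 * d ^ 2 * γ ^ 2 * σ ^ 2 :=
  zoGD_one_step_no_deterministic_noise_general d hd μ L hμ hμL A hAsymm hAlow hAupp x xstar τ σ hτ Ω
    P e he hesphere heinv ξp ξm hξpL2 hξmL2 hξpmean hξmmean hξpvar hξmvar hindp hindm g hg γ hγ0 hγ
end
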